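/- arXiv:1603.09695 — 11 statements merged into one kernel-verified Lean document; each statement's English description precedes it below -/
import Mathlib

section
/- Let M be an abelian monoid and μ ∈ M. Then μ does not have Unbounded Generating Number if and only if there exists a positive integer n such that nμ is properly infinite. -/
/-!
If `n • μ + z = n' • μ` with `n' < n`, then adding the surplus `(n - n') • μ` to `a = n' • μ`
can be repeated without leaving `a`; doing it `n'` times adds at least another copy of `a`,
so `2 • a ≤ a`. Conversely `2 • (n • μ) ≤ n • μ` is the failure `(2 * n) • μ ≤ n • μ` of UGN.
-/

section

variable {M : Type*} [AddCommMonoid M]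

theorem exists_add_nsmul_add_eq_self {a b : M} (h : ∃ z, a + b + z = a) (m : ℕ) :
    ∃ z, a + m • b + z = a := by
  induction m with
  | zero => exact ⟨0, by simp⟩
  | succ m ih =>
    obtain ⟨w, hw⟩ := ih
    obtain ⟨z, hz⟩ := h
    refine ⟨w + z, ?_⟩
    calc a + (m + 1) • b + (w + z) = (a + m • b + w) + b + z := by rw [succ_nsmul]; abel
      _ = a := by rw [hw, hz]

theorem exists_two_nsmul_add_eq_of_lt {μ : M} {n n' : ℕ} (hlt : n' < n)
    (h : ∃ z, n • μ + z = n' • μ) : ∃ z, 2 • (n' • μ) + z = n' • μ := by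
  obtain ⟨k, rfl⟩ := Nat.exists_eq_add_of_lt hlt
  obtain ⟨z, hz⟩ := h
  have hsurplus : ∃ z, n' • μ + (k + 1) • μ + z = n' • μ :=
    ⟨z, by rw [← add_nsmul, ← hz, add_assoc]⟩
  obtain ⟨w, hw⟩ := exists_add_nsmul_add_eq_self hsurplus n'
  refine ⟨(n' * k) • μ + w, ?_⟩
  calc 2 • (n' • μ) + ((n' * k) • μ + w) = n' • μ + n' • (k + 1) • μ + w := by
        rw [two_nsmul, ← mul_nsmul', mul_add_one, add_nsmul]; abel
    _ = n' • μ := hw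

end

/-- Let `M` be an abelian monoid and `μ ∈ M`, where `x ≤ y` means
`∃ z, x + z = y`, an element `u` is properly infinite iff `2 • u ≤ u`, and `μ` has
Unbounded Generating Number iff for all positive `n, n'`, `n • μ ≤ n' • μ → n ≤ n'`.
Then `μ` does not have UGN iff `n • μ` is properly infinite for some positive integer
`n`. -/
theorem stmt_4 (M : Type) [AddCommMonoid M] (μ : M) :
    (¬ ∀ n n' : ℕ, 0 < n → 0 < n' → (∃ z : M, n • μ + z = n' • μ) → n ≤ n') ↔
      ∃ n : ℕ, 0 < n ∧ ∃ z : M, 2 • (n • μ) + z = n • μ := by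
  constructor
  · intro h
    push Not at h
    obtain ⟨n, n', -, hn', hle, hlt⟩ := h
    exact ⟨n', hn', exists_two_nsmul_add_eq_of_lt hlt hle⟩
  · rintro ⟨n, hn, hinf⟩ hugn
    have := hugn (2 * n) n (by omega) hn (by simpa only [mul_nsmul'] using hinf)
    omega
end

section
/- Let M be an abelian monoid and let d₁ and d₂ be order-units in M. Then d₁ has Unbounded Generating Number if and only if d₂ has Unbounded Generating Number. -/
/-!
If `n • d ≤ n' • d` with `n' < n`, then `n' • d` absorbs an element `w ≥ d`, so every multiple of
`d` lies below `n' • d`. Order-units satisfy `d₁ ≤ b • d₂` and `d₂ ≤ a • d₁` with `a > 0`, so a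
failure of UGN for `d₂` gives `(n' a + 1) • d₁ ≤ (n' a + 1) b • d₂ ≤ n' • d₂ ≤ n' a • d₁`, a failure of UGN
for `d₁`.
-/

namespace AlgebraicPreorder

variable {M : Type} [AddCommMonoid M]

def AlgLE (x y : M) : Prop := ∃ z, x + z = y

local infix:50 " ≼ " => AlgLE

def IsOrderUnit (d : M) : Prop := ∀ x : M, ∃ n : ℕ, 0 < n ∧ x ≼ n • d

def HasUGN (d : M) : Prop := ∀ n n' : ℕ, 0 < n → 0 < n' → n • d ≼ n' • d → n ≤ n'

theorem AlgLE.trans {x y w : M} : x ≼ y → y ≼ w → x ≼ w := by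
  rintro ⟨z₁, rfl⟩ ⟨z₂, rfl⟩
  exact ⟨z₁ + z₂, (add_assoc x z₁ z₂).symm⟩

instance : Trans (AlgLE (M := M)) AlgLE AlgLE := ⟨AlgLE.trans⟩

theorem AlgLE.add_right (x y : M) : x ≼ x + y := ⟨y, rfl⟩

theorem AlgLE.nsmul {x y : M} (k : ℕ) : x ≼ y → k • x ≼ k • y := by
  rintro ⟨z, rfl⟩
  exact ⟨k • z, (smul_add k x z).symm⟩

theorem nsmul_algLE_nsmul {m m' : ℕ} (d : M) (h : m ≤ m') : m • d ≼ m' • d :=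
  ⟨(m' - m) • d, by rw [← add_nsmul, Nat.add_sub_cancel' h]⟩

theorem add_nsmul_eq_self {x w : M} (h : x + w = x) (k : ℕ) : x + k • w = x := by
  induction k with
  | zero => simp
  | succ k ih => rw [succ_nsmul, ← add_assoc, ih, h]

theorem nsmul_algLE_of_not_ugn {d : M} {n n' : ℕ} (hlt : n' < n) (h : n • d ≼ n' • d) (m : ℕ) :
    m • d ≼ n' • d := by
  obtain ⟨z, hz⟩ := h
  obtain ⟨c, rfl⟩ := Nat.exists_eq_add_of_lt hlt
  set w := d + (c • d + z)
  have hw : n' • d + w = n' • d :=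
    calc n' • d + w = (n' + c + 1) • d + z := by simp only [w, add_nsmul, one_nsmul]; ac_rfl
      _ = n' • d := hz
  calc m • d ≼ m • w := (AlgLE.add_right _ _).nsmul m
    _ ≼ n' • d + m • w := ⟨n' • d, add_comm _ _⟩
    _ = n' • d := add_nsmul_eq_self hw m

theorem HasUGN.of_algLE_nsmul {d₁ d₂ : M} {a b : ℕ} (hugn : HasUGN d₁) (ha : 0 < a)
    (h₂₁ : d₂ ≼ a • d₁) (h₁₂ : d₁ ≼ b • d₂) : HasUGN d₂ := by
  intro n n' _ _ h
  by_contra! hlt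
  set N := n' * a + 1
  have hN : N • d₁ ≼ (n' * a) • d₁ :=
    calc N • d₁ ≼ N • b • d₂ := h₁₂.nsmul N
      _ = (N * b) • d₂ := (mul_nsmul' d₂ N b).symm
      _ ≼ n' • d₂ := nsmul_algLE_of_not_ugn hlt h _
      _ ≼ n' • a • d₁ := h₂₁.nsmul n'
      _ = (n' * a) • d₁ := (mul_nsmul' d₁ n' a).symm
  have := hugn N (n' * a) (by omega) (by positivity) hN
  omega

theorem IsOrderUnit.hasUGN_iff {d₁ d₂ : M} (h₁ : IsOrderUnit d₁) (h₂ : IsOrderUnit d₂) :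
    HasUGN d₁ ↔ HasUGN d₂ := by
  obtain ⟨a, ha, h₂₁⟩ := h₁ d₂
  obtain ⟨b, hb, h₁₂⟩ := h₂ d₁
  exact ⟨fun h ↦ h.of_algLE_nsmul ha h₂₁ h₁₂, fun h ↦ h.of_algLE_nsmul hb h₁₂ h₂₁⟩

end AlgebraicPreorder

open AlgebraicPreorder in
/-- Let `M` be an abelian monoid and `d₁`, `d₂` order-units of `M`
(`d` is an order-unit iff every `x ∈ M` satisfies `x ≤ n • d` for some positive `n`,
where `x ≤ y` means `∃ z, x + z = y`).  Then `d₁` has Unbounded Generating Number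
(for all positive `n, n'`, `n • d₁ ≤ n' • d₁ → n ≤ n'`) iff `d₂` does. -/
theorem stmt_5 (M : Type) [AddCommMonoid M] (d₁ d₂ : M)
    (h₁ : ∀ x : M, ∃ n : ℕ, 0 < n ∧ ∃ z : M, x + z = n • d₁)
    (h₂ : ∀ x : M, ∃ n : ℕ, 0 < n ∧ ∃ z : M, x + z = n • d₂) :
    ((∀ n n' : ℕ, 0 < n → 0 < n' → (∃ z : M, n • d₁ + z = n' • d₁) → n ≤ n') ↔
      (∀ n n' : ℕ, 0 < n → 0 < n' → (∃ z : M, n • d₂ + z = n' • d₂) → n ≤ n')) :=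
  IsOrderUnit.hasUGN_iff h₁ h₂
end

section
/- Let R and S be Morita equivalent unital rings (i.e., the categories of right R-modules and right S-modules are equivalent). Then R has Unbounded Generating Number if and only if S has Unbounded Generating Number. -/
/-!
Over any ring, the matrix condition in the statement is Mathlib's `RankCondition` (a surjection
`Rⁿ → Rᵐ` splits, and splittings are pairs of matrices with `A * B = 1`), and transposition shows
that it holds for `R` iff it holds for `Rᵐᵒᵖ`. So it suffices to transfer the rank condition along
an equivalence `e : Mod T ≌ Mod U`.

Let `P = e⁻¹(U)`. Since `e(T)` is a quotient of a free `U`-module and `T` is cyclic, `Pᵏ ↠ T` for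
some `k`; symmetrically `Tˡ ↠ P`. A surjection `Uⁿ ↠ Uᵐ` with `n < m` gives `Pⁿ ↠ Pⁿ⁺¹`, hence
`Pⁿ ↠ Pⁿ⁺ᵃ` for all `a`, and then `Tⁿˡ ↠ Pⁿ ↠ Pᵃᵏ ↠ Tᵃ` with `a = nl + 1` contradicts the rank
condition for `T`.
-/

open CategoryTheory CategoryTheory.Limits MulOpposite
open scoped Matrix DirectSum

universe u

section

variable (R : Type*) [Ring R]

def Surjects (M N : Type*) [AddCommGroup M] [AddCommGroup N] [Module R M] [Module R N] : Prop :=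
  ∃ f : M →ₗ[R] N, Function.Surjective f

variable {R} {M N P : Type*} [AddCommGroup M] [AddCommGroup N] [AddCommGroup P]
  [Module R M] [Module R N] [Module R P]

namespace Surjects

theorem trans (h₁ : Surjects R M N) (h₂ : Surjects R N P) : Surjects R M P :=
  let ⟨f, hf⟩ := h₁
  let ⟨g, hg⟩ := h₂
  ⟨g ∘ₗ f, hg.comp hf⟩

theorem of_linearEquiv (e : M ≃ₗ[R] N) : Surjects R M N := ⟨e, e.surjective⟩

theorem pi (ι : Type*) (h : Surjects R M N) : Surjects R (ι → M) (ι → N) :=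
  let ⟨f, hf⟩ := h
  ⟨f.compLeft ι, hf.comp_left⟩

theorem prod_left (h : Surjects R N P) : Surjects R (M × N) (M × P) :=
  let ⟨f, hf⟩ := h
  ⟨LinearMap.id.prodMap f, Function.surjective_id.prodMap hf⟩

theorem pi_fin_of_le {a b : ℕ} (h : b ≤ a) : Surjects R (Fin a → M) (Fin b → M) :=
  ⟨LinearMap.funLeft R M (Fin.castLE h),
    LinearMap.funLeft_surjective_of_injective _ _ _ (Fin.castLE_injective h)⟩

theorem pi_fin_mul {k : ℕ} (h : Surjects R (Fin k → M) N) (a : ℕ) :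
    Surjects R (Fin (a * k) → M) (Fin a → N) :=
  (of_linearEquiv ((LinearEquiv.funCongrLeft R M finProdFinEquiv).trans
    (LinearEquiv.curry R M _ _))).trans (h.pi _)

theorem pi_fin_add_of_succ {n : ℕ} (h : Surjects R (Fin n → M) (Fin (n + 1) → M)) :
    ∀ a : ℕ, Surjects R (Fin n → M) (Fin (n + a) → M)
  | 0 => pi_fin_of_le le_rfl
  | a + 1 => h.trans <| (of_linearEquiv (Fin.consLinearEquiv R fun _ => M).symm).trans <|
      (pi_fin_add_of_succ h a).prod_left.trans (of_linearEquiv (Fin.consLinearEquiv R fun _ => M))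

theorem exists_pi_fin_of_directSum {ι : Type*} (h : Surjects R (⨁ _ : ι, M) R) :
    ∃ k : ℕ, Surjects R (Fin k → M) R := by
  classical
  obtain ⟨f, hf⟩ := h
  obtain ⟨x, hx⟩ := hf 1
  let s := DFinsupp.support x
  let g : (s → M) →ₗ[R] R :=
    LinearMap.lsum R (fun _ : s => M) ℕ fun i => f ∘ₗ DirectSum.lof R ι (fun _ => M) i
  have hg : g (fun i => x i) = 1 := by
    calc g (fun i => x i) = ∑ i : s, f (DirectSum.of (fun _ : ι => M) i (x i)) := by
          simp [g, DirectSum.lof_eq_of]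
      _ = f x := by
        rw [Finset.sum_coe_sort s fun i => f (DirectSum.of _ i (x i)), ← map_sum,
          DirectSum.sum_support_of]
      _ = 1 := hx
  have hg_surj : Function.Surjective g := fun r =>
    ⟨r • fun i : s => x i, by rw [map_smul, hg, smul_eq_mul, mul_one]⟩
  exact ⟨s.card,
    (of_linearEquiv (LinearEquiv.funCongrLeft R M s.equivFin)).trans ⟨g, hg_surj⟩⟩

end Surjects

theorem surjects_directSum_self (M : Type*) [AddCommGroup M] [Module R M] :
    Surjects R (⨁ _ : M, R) M := by
  classical
  refine ⟨DirectSum.toModule R M M fun m => LinearMap.toSpanSingleton R M m,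
    fun m => ⟨DirectSum.lof R M (fun _ => R) m 1, ?_⟩⟩
  simp

end

section RankCondition

variable {R : Type*} [Ring R]

theorem rankCondition_iff_exists_mul_eq_one : RankCondition R ↔
    ∀ m n : ℕ, (∃ (A : Matrix (Fin m) (Fin n) R) (B : Matrix (Fin n) (Fin m) R), A * B = 1) →
      m ≤ n := by
  refine ⟨fun _ m n ⟨A, B, hAB⟩ => ?_, fun h => ⟨fun {n m} f hf => ?_⟩⟩
  · refine le_of_fin_surjective R B.toLinearMapRight' fun v => ⟨A.toLinearMapRight' v, ?_⟩
    rw [← Matrix.toLinearMapRight'_mul_apply, hAB, Matrix.toLinearMapRight'_one,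
      LinearMap.id_apply]
  · obtain ⟨g, hfg⟩ := Module.projective_lifting_property f LinearMap.id hf
    refine h m n ⟨Matrix.toLinearMapRight'.symm g, Matrix.toLinearMapRight'.symm f, ?_⟩
    apply Matrix.toLinearMapRight'.injective
    simp [Matrix.toLinearMapRight'_mul, hfg]

theorem Matrix.transpose_map_unop_mul {m n l : Type*} [Fintype n]
    (A : Matrix m n Rᵐᵒᵖ) (B : Matrix n l Rᵐᵒᵖ) :
    (A * B)ᵀ.map unop = Bᵀ.map unop * Aᵀ.map unop := by
  ext i j
  simp [Matrix.mul_apply]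

theorem Matrix.transpose_map_op_mul {m n l : Type*} [Fintype n]
    (A : Matrix m n R) (B : Matrix n l R) :
    (A * B)ᵀ.map op = Bᵀ.map op * Aᵀ.map op := by
  ext i j
  simp [Matrix.mul_apply]

theorem rankCondition_mulOpposite_iff : RankCondition Rᵐᵒᵖ ↔ RankCondition R := by
  simp only [rankCondition_iff_exists_mul_eq_one]
  refine ⟨fun h m n ⟨A, B, hAB⟩ => h m n ⟨Bᵀ.map op, Aᵀ.map op, ?_⟩,
    fun h m n ⟨A, B, hAB⟩ => h m n ⟨Bᵀ.map unop, Aᵀ.map unop, ?_⟩⟩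
  · rw [← Matrix.transpose_map_op_mul, hAB]; simp
  · rw [← Matrix.transpose_map_unop_mul, hAB]; simp

theorem rankCondition_iff_forall_pos [Nontrivial R] : RankCondition R ↔
    ∀ m n : ℕ, 0 < m → 0 < n →
      (∃ (A : Matrix (Fin m) (Fin n) R) (B : Matrix (Fin n) (Fin m) R), A * B = 1) → m ≤ n := by
  rw [rankCondition_iff_exists_mul_eq_one]
  refine ⟨fun h m n _ _ => h m n, fun h m n ⟨A, B, hAB⟩ => ?_⟩
  rcases Nat.eq_zero_or_pos m with rfl | hm
  · exact Nat.zero_le n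
  rcases Nat.eq_zero_or_pos n with rfl | hn
  · have h00 := congrFun (congrFun hAB ⟨0, hm⟩) ⟨0, hm⟩
    simp [Matrix.mul_apply] at h00
  · exact h m n hm hn ⟨A, B, hAB⟩

end RankCondition

section Equivalence

variable {T U : Type u} [Ring T] [Ring U]

theorem Surjects.map (F : ModuleCat.{u} U ⥤ ModuleCat.{u} T) [F.PreservesEpimorphisms]
    {X Y : ModuleCat.{u} U} (h : Surjects U X Y) : Surjects T (F.obj X) (F.obj Y) := by
  obtain ⟨f, hf⟩ := h
  have : Epi (ModuleCat.ofHom f) := (ModuleCat.epi_iff_surjective _).2 hf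
  exact ⟨(F.map (ModuleCat.ofHom f)).hom, (ModuleCat.epi_iff_surjective _).1 inferInstance⟩

noncomputable def ModuleCat.mapPiFinIso (F : ModuleCat.{u} U ⥤ ModuleCat.{u} T)
    [PreservesFiniteProducts F] (X : ModuleCat.{u} U) (n : ℕ) :
    F.obj (ModuleCat.of U (Fin n → X)) ≅ ModuleCat.of T (Fin n → F.obj X) :=
  F.mapIso (ModuleCat.piIsoPi fun _ => X).symm ≪≫ PreservesProduct.iso F _ ≪≫
    ModuleCat.piIsoPi _

noncomputable def ModuleCat.mapDirectSumIso (F : ModuleCat.{u} U ⥤ ModuleCat.{u} T)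
    [PreservesColimits F] (X : ModuleCat.{u} U) (ι : Type u) [DecidableEq ι] :
    F.obj (ModuleCat.of U (⨁ _ : ι, X)) ≅ ModuleCat.of T (⨁ _ : ι, F.obj X) :=
  F.mapIso (ModuleCat.coprodIsoDirectSum fun _ => X).symm ≪≫ PreservesCoproduct.iso F _ ≪≫
    ModuleCat.coprodIsoDirectSum _

theorem exists_surjects_pi_inverse_obj (e : ModuleCat.{u} T ≌ ModuleCat.{u} U) :
    ∃ k : ℕ, Surjects T (Fin k → e.inverse.obj (ModuleCat.of U U)) T := by
  classical
  let Q := e.functor.obj (ModuleCat.of T T)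
  have hQ : Surjects U (ModuleCat.of U (⨁ _ : Q, U)) Q := surjects_directSum_self Q
  refine Surjects.exists_pi_fin_of_directSum <|
    (Surjects.of_linearEquiv (ModuleCat.mapDirectSumIso e.inverse _ Q).toLinearEquiv.symm).trans <|
      (hQ.map e.inverse).trans
        (Surjects.of_linearEquiv (e.unitIso.app (ModuleCat.of T T)).toLinearEquiv.symm)

theorem RankCondition.of_equivalence [RankCondition T] (e : ModuleCat.{u} T ≌ ModuleCat.{u} U) :
    RankCondition U := by
  refine ⟨fun {n m} f hf => ?_⟩
  by_contra! hnm
  set P := e.inverse.obj (ModuleCat.of U U)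
  have powIso (n : ℕ) := (ModuleCat.mapPiFinIso e.inverse (ModuleCat.of U U) n).toLinearEquiv
  obtain ⟨k, hk⟩ := exists_surjects_pi_inverse_obj e
  obtain ⟨l, hl⟩ : ∃ l : ℕ, Surjects T (Fin l → T) P := by
    obtain ⟨l, hl⟩ := exists_surjects_pi_inverse_obj e.symm
    refine ⟨l, (Surjects.of_linearEquiv ?_).trans <| Surjects.map e.inverse
      (X := ModuleCat.of U (Fin l → e.functor.obj (ModuleCat.of T T))) (Y := ModuleCat.of U U) hl⟩
    exact (LinearEquiv.piCongrRight fun _ =>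
      (e.unitIso.app (ModuleCat.of T T)).toLinearEquiv).trans
        (ModuleCat.mapPiFinIso e.inverse _ l).toLinearEquiv.symm
  have hP : Surjects T (Fin n → P) (Fin (n + 1) → P) :=
    (Surjects.of_linearEquiv (powIso n).symm).trans <|
      (Surjects.map e.inverse (X := ModuleCat.of U (Fin n → U)) (Y := ModuleCat.of U (Fin m → U))
        ⟨f, hf⟩).trans <|
      (Surjects.of_linearEquiv (powIso m)).trans (Surjects.pi_fin_of_le hnm)
  obtain ⟨g, hg⟩ : Surjects T (Fin (n * l) → T) (Fin (n * l + 1) → T) :=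
    (hl.pi_fin_mul n).trans <| (hP.pi_fin_add_of_succ _).trans <|
      (Surjects.pi_fin_of_le (Nat.le_add_left _ n)).trans (hk.pi_fin_mul (n * l + 1))
  have := le_of_fin_surjective g hg
  omega

end Equivalence

/-- If `R` and `S` are Morita equivalent unital (nonzero) rings — i.e. the
categories of right `R`-modules and right `S`-modules are equivalent — then `R` has
Unbounded Generating Number if and only if `S` does.  (Right modules over `R` are modules
over `Rᵐᵒᵖ`; UGN is formulated via matrices: whenever `A ∈ M_{m×n}`, `B ∈ M_{n×m}` with
`A * B = I_m`, then `n ≥ m`.) -/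
theorem stmt_6 (R S : Type) [Ring R] [Ring S] [Nontrivial R] [Nontrivial S]
    (h : Nonempty (CategoryTheory.Equivalence (ModuleCat.{0} Rᵐᵒᵖ) (ModuleCat.{0} Sᵐᵒᵖ))) :
    ((∀ m n : ℕ, 0 < m → 0 < n →
        (∃ (A : Matrix (Fin m) (Fin n) R) (B : Matrix (Fin n) (Fin m) R), A * B = 1) →
          m ≤ n) ↔
      (∀ m n : ℕ, 0 < m → 0 < n →
        (∃ (A : Matrix (Fin m) (Fin n) S) (B : Matrix (Fin n) (Fin m) S), A * B = 1) →
          m ≤ n)) := by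
  obtain ⟨e⟩ := h
  rw [← rankCondition_iff_forall_pos, ← rankCondition_iff_forall_pos,
    ← rankCondition_mulOpposite_iff (R := R), ← rankCondition_mulOpposite_iff (R := S)]
  exact ⟨fun _ => .of_equivalence e, fun _ => .of_equivalence e.symm⟩
end

section
/- Let E be a finite source-free directed graph in which no cycle is a source cycle. Then there exists a vertex v ∈ E⁰ such that there are two distinct cycles based at v and such that |r⁻¹(v)| ≥ 2. -/
/-!
Take a vertex `x` that is minimal for reachability: every vertex reaching `x` is reached from `x`.
If `u` reaches `x` and `r e = u`, then `s e` reaches `x`, hence is reached from `x` and so from `u`;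
closing a walk `u ⇝ s e` with `e` and shortcutting repeated vertices (which keeps the last edge)
gives a cycle based at `u` ending in `e`. For `u = x` this yields a cycle `C` through `x`. As `C` is
not a source cycle, some vertex `v` of `C` receives two edges `e ≠ f`, and `v` reaches `x`; the
cycles based at `v` ending in `e` and in `f` are then distinct.
-/

variable {V E : Type}

/-- A cycle in the directed graph with edge set `E`, vertex set `V`, and source/range
maps `s r : E → V`: a nonempty list of edges `e₁ ⋯ eₙ` with `r eᵢ = s eᵢ₊₁`
(indices cyclically, so in particular `r eₙ = s e₁`) whose source vertices are pairwise
distinct. -/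
def IsCycle (s r : E → V) (c : List E) : Prop :=
  ∃ h : 0 < c.length,
    (∀ (i : ℕ) (hi : i < c.length),
        r (c.get ⟨i, hi⟩) = s (c.get ⟨(i + 1) % c.length, Nat.mod_lt _ h⟩)) ∧
    (c.map s).Nodup

/-- A cycle based at the vertex `v`: a cycle whose first edge has source `v`. -/
def IsCycleBasedAt (s r : E → V) (c : List E) (v : V) : Prop :=
  IsCycle s r c ∧ (c.map s).head? = some v

namespace DirectedGraph

def IsWalk (s r : E → V) : V → V → List E → Prop
  | v, w, [] => v = w
  | v, w, e :: l => s e = v ∧ IsWalk s r (r e) w l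

def Reach (s r : E → V) : V → V → Prop :=
  Relation.ReflTransGen fun x y => ∃ e, s e = x ∧ r e = y

section Walks

variable {s r : E → V}

theorem IsWalk.append {u v w : V} {l₁ l₂ : List E}
    (h₁ : IsWalk s r u v l₁) (h₂ : IsWalk s r v w l₂) : IsWalk s r u w (l₁ ++ l₂) := by
  induction l₁ generalizing u with
  | nil => cases h₁; exact h₂
  | cons e t ih => exact ⟨h₁.1, ih h₁.2⟩

theorem IsWalk.take_drop {v w : V} {l : List E} (h : IsWalk s r v w l)
    {i : ℕ} (hi : i < l.length) :
    IsWalk s r v (s l[i]) (l.take i) ∧ IsWalk s r (s l[i]) w (l.drop i) := by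
  induction l generalizing v i with
  | nil => simp at hi
  | cons e t ih =>
    cases i with
    | zero => exact ⟨h.1.symm, by simpa [h.1] using h⟩
    | succ i =>
      obtain ⟨htake, hdrop⟩ := ih h.2 (Nat.lt_of_succ_lt_succ hi)
      exact ⟨⟨h.1, htake⟩, hdrop⟩

theorem IsWalk.s_head {v w : V} {l : List E} (h : IsWalk s r v w l) (hl : l ≠ []) :
    s (l.head hl) = v := by
  cases l with
  | nil => contradiction
  | cons e t => exact h.1

theorem IsWalk.r_getElem {v w : V} {l : List E} (h : IsWalk s r v w l)
    {i : ℕ} (hi : i + 1 < l.length) : r l[i] = s l[i + 1] := by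
  induction l generalizing v i with
  | nil => simp at hi
  | cons e t ih =>
    cases i with
    | zero =>
      obtain ⟨f, t, rfl⟩ := List.exists_cons_of_length_pos (by simpa using hi)
      exact h.2.1.symm
    | succ i => exact ih h.2 (Nat.lt_of_succ_lt_succ hi)

theorem IsWalk.r_getLast {v w : V} {l : List E} (h : IsWalk s r v w l) (hl : l ≠ []) :
    r (l.getLast hl) = w := by
  induction l generalizing v with
  | nil => contradiction
  | cons e t ih =>
    cases t with
    | nil => exact h.2
    | cons f t => exact ih h.2 (List.cons_ne_nil f t)

theorem IsWalk.reach {v w : V} {l : List E} (h : IsWalk s r v w l) : Reach s r v w := by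
  induction l generalizing v with
  | nil => exact h ▸ Relation.ReflTransGen.refl
  | cons e t ih => exact Relation.ReflTransGen.head ⟨e, h.1, rfl⟩ (ih h.2)

theorem IsWalk.reach_of_mem {v w u : V} {l : List E} (h : IsWalk s r v w l)
    (hu : u ∈ l.map s) : Reach s r u w := by
  obtain ⟨i, hi, rfl⟩ := List.getElem_of_mem hu
  rw [List.getElem_map]
  exact (h.take_drop (by simpa using hi)).2.reach

theorem Reach.exists_isWalk {v w : V} (h : Reach s r v w) : ∃ l, IsWalk s r v w l := by
  induction h with
  | refl => exact ⟨[], rfl⟩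
  | tail _ hstep ih =>
    obtain ⟨l, hl⟩ := ih
    obtain ⟨e, rfl, rfl⟩ := hstep
    exact ⟨l ++ [e], hl.append ⟨rfl, rfl⟩⟩

theorem IsWalk.isCycleBasedAt {v : V} {c : List E} (h : IsWalk s r v v c) (hc : c ≠ [])
    (hnodup : (c.map s).Nodup) : IsCycleBasedAt s r c v := by
  have hlen : 0 < c.length := List.length_pos_iff.2 hc
  refine ⟨⟨hlen, fun i hi => ?_, hnodup⟩, ?_⟩
  · simp only [List.get_eq_getElem]
    rcases Nat.lt_or_ge (i + 1) c.length with hi' | hi'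
    · simp only [Nat.mod_eq_of_lt hi']
      exact h.r_getElem hi'
    · have hlast : i = c.length - 1 := by omega
      subst hlast
      simp only [Nat.sub_add_cancel hlen, Nat.mod_self]
      rw [← List.getLast_eq_getElem hc, h.r_getLast hc, ← List.head_eq_getElem hc, h.s_head hc]
  · rw [List.head?_map, List.head?_eq_some_head hc, Option.map_some, h.s_head hc]

theorem IsWalk.exists_nodup_getLast?_eq {v : V} {l : List E} (h : IsWalk s r v v l) :
    ∃ l', IsWalk s r v v l' ∧ (l'.map s).Nodup ∧ l'.getLast? = l.getLast? := by
  induction hn : l.length using Nat.strong_induction_on generalizing l with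
  | _ n ih =>
  by_cases hnodup : (l.map s).Nodup
  · exact ⟨l, h, hnodup, rfl⟩
  obtain ⟨a, b, hab, ha, hb, hsab⟩ :
      ∃ a b, a < b ∧ ∃ (ha : a < l.length) (hb : b < l.length), s l[a] = s l[b] := by
    simpa [List.Nodup, List.pairwise_iff_getElem] using hnodup
  have hdrop : l.drop b ≠ [] := by simpa using hb
  have hshort : IsWalk s r v v (l.take a ++ l.drop b) :=
    (h.take_drop ha).1.append (hsab ▸ (h.take_drop hb).2)
  have hlen : (l.take a ++ l.drop b).length < n := by
    simp only [List.length_append, List.length_take, List.length_drop]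
    omega
  obtain ⟨l', hl', hnodup', hlast'⟩ := ih _ hlen hshort rfl
  refine ⟨l', hl', hnodup', ?_⟩
  rw [hlast', List.getLast?_append_of_ne_nil _ hdrop, List.getLast?_drop, if_neg (by omega)]

end Walks

theorem exists_reach_minimal [Finite V] [Nonempty V] (s r : E → V) :
    ∃ x : V, ∀ y, Reach s r y x → Reach s r x y := by
  obtain ⟨x, hx⟩ := Finite.exists_min fun x => {y | Reach s r y x}.ncard
  refine ⟨x, fun y hyx => ?_⟩
  have hsub : {z | Reach s r z y} ⊆ {z | Reach s r z x} := fun z hzy => hzy.trans hyx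
  have hxy : x ∈ {z | Reach s r z y} :=
    (Set.eq_of_subset_of_ncard_le hsub (hx y)).symm ▸ Relation.ReflTransGen.refl
  exact hxy

theorem exists_isCycleBasedAt_getLast?_eq {s r : E → V} {x u : V}
    (hx : ∀ y, Reach s r y x → Reach s r x y) (hux : Reach s r u x) {e : E} (he : r e = u) :
    ∃ c, IsWalk s r u u c ∧ IsCycleBasedAt s r c u ∧ c.getLast? = some e := by
  have hex : Reach s r (s e) x := Relation.ReflTransGen.head ⟨e, rfl, he⟩ hux
  obtain ⟨l, hl⟩ := Reach.exists_isWalk (hux.trans (hx _ hex))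
  have he' : IsWalk s r (s e) u [e] := ⟨rfl, he⟩
  obtain ⟨c, hc, hnodup, hlast⟩ := (hl.append he').exists_nodup_getLast?_eq
  rw [List.getLast?_concat] at hlast
  have hne : c ≠ [] := by rintro rfl; simp at hlast
  exact ⟨c, hc, hc.isCycleBasedAt hne hnodup, hlast⟩

end DirectedGraph

open DirectedGraph in
theorem stmt_7_general [Fintype V] [Fintype E] [DecidableEq V]
    (s r : E → V) (hne : Nonempty V)
    (hsourcefree : ∀ v : V, ∃ e : E, r e = v)
    (hnosourcecycle : ∀ c : List E, IsCycle s r c →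
      ¬ ∀ v ∈ c.map s, (Finset.univ.filter fun e => r e = v).card = 1) :
    ∃ v : V,
      (∃ c c' : List E, c ≠ c' ∧ IsCycleBasedAt s r c v ∧ IsCycleBasedAt s r c' v) ∧
      2 ≤ (Finset.univ.filter fun e => r e = v).card := by
  obtain ⟨x, hx⟩ := exists_reach_minimal s r
  obtain ⟨e₀, he₀⟩ := hsourcefree x
  obtain ⟨C, hCwalk, hC, -⟩ := exists_isCycleBasedAt_getLast?_eq hx .refl he₀
  obtain ⟨v, hvC, hv⟩ : ∃ v ∈ C.map s, (Finset.univ.filter fun e => r e = v).card ≠ 1 := by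
    simpa using hnosourcecycle C hC.1
  have hv2 : 2 ≤ (Finset.univ.filter fun e => r e = v).card := by
    obtain ⟨e, he⟩ := hsourcefree v
    have : 0 < (Finset.univ.filter fun e => r e = v).card := Finset.card_pos.2 ⟨e, by simpa⟩
    omega
  obtain ⟨e, he, f, hf, hef⟩ := Finset.one_lt_card.1 hv2
  have hvx := hCwalk.reach_of_mem hvC
  obtain ⟨c, -, hc, hce⟩ := exists_isCycleBasedAt_getLast?_eq hx hvx (Finset.mem_filter.1 he).2
  obtain ⟨c', -, hc', hcf⟩ := exists_isCycleBasedAt_getLast?_eq hx hvx (Finset.mem_filter.1 hf).2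
  refine ⟨v, ⟨c, c', fun hcc => hef ?_, hc, hc'⟩, hv2⟩
  simpa [hcc, hcf] using hce.symm

/-- Let `E` be a finite (nonempty) source-free directed graph in which no
cycle is a source cycle (a cycle `c` is a source cycle if `|r⁻¹(v)| = 1` for every vertex
`v` of `c`).  Then there is a vertex `v` at which two distinct cycles are based and with
`|r⁻¹(v)| ≥ 2`. -/
theorem stmt_7 [Fintype V] [Fintype E] [DecidableEq V] [DecidableEq E]
    (s r : E → V) (hne : Nonempty V)
    (hsourcefree : ∀ v : V, ∃ e : E, r e = v)
    (hnosourcecycle : ∀ c : List E, IsCycle s r c →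
      ¬ ∀ v ∈ c.map s, (Finset.univ.filter fun e => r e = v).card = 1) :
    ∃ v : V,
      (∃ c c' : List E, c ≠ c' ∧ IsCycleBasedAt s r c v ∧ IsCycleBasedAt s r c' v) ∧
      2 ≤ (Finset.univ.filter fun e => r e = v).card :=
  stmt_7_general s r hne hsourcefree hnosourcecycle
end

section
/- Let E be a finite source-free directed graph with n = |E⁰| vertices in which no cycle is a source cycle. Then for each positive integer a there exists a row vector m_a = [m₁ … mₙ] ∈ ℕⁿ with mᵢ ≥ a for all i = 1, …, n, such that (A_E^t − Iₙ)·m_a^t ≥ [a … a]^t, where the inequality between integer vectors is entrywise. -/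
variable {V E : Type}

/-- The incidence matrix of the graph (with integer entries): the `(u, w)` entry is the
number of edges `e` with `s e = u` and `r e = w`. -/
def incMatrix [Fintype E] [DecidableEq V] (s r : E → V) : Matrix V V ℤ :=
  Matrix.of fun u w => ((Finset.univ.filter fun e : E => s e = u ∧ r e = w).card : ℤ)

/-! Call a vertex a confluence if its in-degree is at least two. Walking backwards from any
vertex along chosen incoming edges must reach a confluence: otherwise the walk ends up on a
periodic orbit of vertices of in-degree one, which is a source cycle. Ranking vertices by their
distance to a confluence, every other vertex has an incoming edge from a vertex of smaller rank.
Since `((A_E)ᵀ - 1) m` at `v` is `∑_{r e = v} m (s e) - m v`, the vector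
`m v = a (2N + 1 - d v)`, with `N` the maximal rank, works: at a non-confluence the edge from
lower rank alone contributes `m v + a`, and at a confluence two incoming edges contribute at
least `2a (N + 1) ≥ m v + a`. -/

open Finset Function
open scoped Matrix

theorem Function.exists_iterate_mem_periodicPts {α : Type*} [Finite α] (f : α → α) (x : α) :
    ∃ n, f^[n] x ∈ periodicPts f := by
  obtain ⟨m, n, hne, heq⟩ := Finite.exists_ne_map_eq_of_infinite (f^[·] x)
  wlog hmn : m < n generalizing m n
  · exact this n m hne.symm heq.symm (by omega)
  refine ⟨m, mk_mem_periodicPts (n := n - m) (by omega) ?_⟩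
  rw [IsPeriodicPt, IsFixedPt, ← iterate_add_apply, Nat.sub_add_cancel hmn.le]
  exact heq.symm

section BackOrbit

variable (s r : E → V) (f : V → E) {w : V}

/-- When `f v` is an edge into `v`, the map `s ∘ f` walks backwards along edges, so the
periodic orbit of `w` under it, listed in reverse, is traversed by a closed path. -/
noncomputable def backOrbit (w : V) : List E :=
  (List.range (minimalPeriod (s ∘ f) w)).map
    fun i => f ((s ∘ f)^[minimalPeriod (s ∘ f) w - 1 - i] w)

theorem isCycle_backOrbit (hf : ∀ v, r (f v) = v) (hw : w ∈ periodicPts (s ∘ f)) :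
    IsCycle s r (backOrbit s f w) := by
  set g := s ∘ f
  set p := minimalPeriod g w
  have hp : 0 < p := minimalPeriod_pos_of_mem_periodicPts hw
  have hdef : backOrbit s f w = (List.range p).map fun i => f (g^[p - 1 - i] w) := rfl
  have hlen : (backOrbit s f w).length = p := by simp [hdef]
  have hget : ∀ i (hi : i < (backOrbit s f w).length),
      (backOrbit s f w).get ⟨i, hi⟩ = f (g^[p - 1 - i] w) := by
    simp [hdef]
  refine ⟨hlen ▸ hp, fun i hi => ?_, ?_⟩
  · rw [hget, hget, hf]
    change _ = g (g^[_] w)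
    rw [← iterate_succ_apply' g, Nat.succ_eq_add_one]
    simp only [hlen] at hi ⊢
    rcases Nat.lt_or_ge (i + 1) p with hlt | hge
    · rw [Nat.mod_eq_of_lt hlt]
      congr 1
      omega
    · rw [show i + 1 = p by omega, Nat.mod_self, Nat.sub_zero, Nat.sub_add_cancel hp,
        (isPeriodicPt_minimalPeriod g w).eq, show p - 1 - i = 0 by omega, iterate_zero_apply]
  · have hmem : ∀ k, g^[k] w ∈ periodicPts g := fun k =>
      mk_mem_periodicPts hp ((isPeriodicPt_minimalPeriod g w).apply_iterate k)
    rw [hdef, List.map_map]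
    refine List.nodup_range.map_on fun i hi j hj hij => ?_
    rw [List.mem_range] at hi hj
    have := (bijOn_periodicPts g).injOn (hmem _) (hmem _) hij
    have := iterate_injOn_Iio_minimalPeriod (f := g) (Set.mem_Iio.2 (by omega : p - 1 - i < p))
      (Set.mem_Iio.2 (by omega : p - 1 - j < p)) this
    omega

theorem exists_iterate_eq_of_mem_map_backOrbit {v : V} (hv : v ∈ (backOrbit s f w).map s) :
    ∃ k, (s ∘ f)^[k] w = v := by
  simp only [backOrbit, List.map_map, List.mem_map, List.mem_range] at hv
  obtain ⟨i, -, rfl⟩ := hv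
  exact ⟨_, iterate_succ_apply' (s ∘ f) _ w⟩

end BackOrbit

section Confluence

variable [Fintype E] [DecidableEq V] (s r : E → V)

lemma mulVec_transpose_incMatrix_sub_one [Fintype V] (M : V → ℤ) (v : V) :
    (((incMatrix s r)ᵀ - 1) *ᵥ M) v = ∑ e with r e = v, M (s e) - M v := by
  rw [Matrix.sub_mulVec, Pi.sub_apply, Matrix.one_mulVec]
  congr 1
  simp only [Matrix.mulVec, dotProduct, Matrix.transpose_apply, incMatrix, Matrix.of_apply,
    card_filter, Nat.cast_sum, sum_mul, sum_filter]
  rw [sum_comm]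
  refine sum_congr rfl fun e _ => ?_
  simp [ite_and]

def ReachedFromConfluence : ℕ → V → Prop
  | 0, v => 2 ≤ #{e | r e = v}
  | k + 1, v => ∃ e, r e = v ∧ ReachedFromConfluence k (s e)

variable {s r}

theorem exists_reachedFromConfluence [Finite V] (hsourcefree : ∀ v : V, ∃ e : E, r e = v)
    (hnosourcecycle : ∀ c : List E, IsCycle s r c →
      ¬ ∀ v ∈ c.map s, #{e | r e = v} = 1)
    (v₀ : V) : ∃ k, ReachedFromConfluence s r k v₀ := by
  by_contra! hv₀
  choose f hf using hsourcefree
  have hunreached : ∀ i k, ¬ ReachedFromConfluence s r k ((s ∘ f)^[i] v₀) := by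
    intro i
    induction i with
    | zero => exact hv₀
    | succ i ih =>
      intro k hk
      rw [iterate_succ_apply'] at hk
      exact ih (k + 1) ⟨f _, hf _, hk⟩
  obtain ⟨n, hn⟩ := exists_iterate_mem_periodicPts (s ∘ f) v₀
  refine hnosourcecycle _ (isCycle_backOrbit s r f hf hn) fun v hv => ?_
  obtain ⟨k, rfl⟩ := exists_iterate_eq_of_mem_map_backOrbit s f hv
  have hnot_confluence : ¬ 2 ≤ #{e | r e = (s ∘ f)^[k] ((s ∘ f)^[n] v₀)} := by
    rw [← iterate_add_apply]
    exact hunreached _ 0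
  have hpos : 0 < #{e | r e = (s ∘ f)^[k] ((s ∘ f)^[n] v₀)} :=
    card_pos.2 ⟨f _, mem_filter.2 ⟨mem_univ _, hf _⟩⟩
  omega

open Classical in
theorem exists_rank_of_forall_reachedFromConfluence
    (h : ∀ v, ∃ k, ReachedFromConfluence s r k v) :
    ∃ d : V → ℕ, ∀ v, 2 ≤ #{e | r e = v} ∨ ∃ e, r e = v ∧ d (s e) < d v := by
  refine ⟨fun v => Nat.find (h v), fun v => ?_⟩
  obtain ⟨k, hk⟩ : ∃ k, Nat.find (h v) = k := ⟨_, rfl⟩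
  have hreach := Nat.find_spec (h v)
  rw [hk] at hreach
  cases k with
  | zero => exact Or.inl hreach
  | succ k =>
    obtain ⟨e, he, hreach_e⟩ := hreach
    have hk_lt : k < Nat.find (h v) := by omega
    exact Or.inr ⟨e, he, (Nat.find_min' (h (s e)) hreach_e).trans_lt hk_lt⟩

end Confluence

theorem stmt_8_general [Fintype V] [Fintype E] [DecidableEq V]
    (s r : E → V)
    (hsourcefree : ∀ v : V, ∃ e : E, r e = v)
    (hnosourcecycle : ∀ c : List E, IsCycle s r c →
      ¬ ∀ v ∈ c.map s, (Finset.univ.filter fun e => r e = v).card = 1)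
    (a : ℕ) :
    ∃ m : V → ℕ, (∀ v : V, a ≤ m v) ∧
      ∀ v : V, (a : ℤ) ≤
        Matrix.mulVec (Matrix.transpose (incMatrix s r) - 1) (fun w => (m w : ℤ)) v := by
  obtain ⟨d, hd⟩ := exists_rank_of_forall_reachedFromConfluence
    (exists_reachedFromConfluence hsourcefree hnosourcecycle)
  set N := univ.sup d
  have hdN : ∀ v, d v ≤ N := fun v => le_sup (mem_univ v)
  set m : V → ℕ := fun v => a * (2 * N + 1 - d v)
  have hm : ∀ v, (m v : ℤ) = a * (2 * N + 1) - a * d v := fun v => by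
    simp only [m, Nat.cast_mul, Nat.cast_sub (by linarith [hdN v] : d v ≤ 2 * N + 1)]
    push_cast
    ring
  refine ⟨m, fun v => Nat.le_mul_of_pos_right a (Nat.sub_pos_of_lt (by linarith [hdN v])),
    fun v => ?_⟩
  rw [mulVec_transpose_incMatrix_sub_one]
  rcases hd v with hconfluence | ⟨e, he, hlt⟩
  · calc (a : ℤ) ≤ #{e | r e = v} • ((a : ℤ) * (N + 1)) - m v := by
          have hcard : (2 : ℤ) ≤ #{e | r e = v} := by exact_mod_cast hconfluence
          rw [hm, nsmul_eq_mul]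
          nlinarith [mul_nonneg (sub_nonneg.2 hcard) (by positivity : (0 : ℤ) ≤ a * (N + 1)),
            (by positivity : (0 : ℤ) ≤ a * d v)]
      _ ≤ ∑ e with r e = v, (m (s e) : ℤ) - m v := by
          gcongr
          exact card_nsmul_le_sum _ _ _ fun e _ => by rw [hm]; nlinarith [hdN (s e)]
  · calc (a : ℤ) ≤ m (s e) - m v := by
          rw [hm, hm]
          nlinarith
      _ ≤ ∑ e with r e = v, (m (s e) : ℤ) - m v := by
          gcongr
          exact single_le_sum (f := fun e => (m (s e) : ℤ)) (fun _ _ => Nat.cast_nonneg _)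
            (mem_filter.2 ⟨mem_univ _, he⟩)

/-- Let `E` be a finite source-free directed graph in which no cycle is a
source cycle.  Then for each positive integer `a` there is a vector `m ∈ ℕ^{E⁰}` with
`m v ≥ a` for every vertex `v`, such that `(A_E^t − I) · m ≥ (a, …, a)` entrywise. -/
theorem stmt_8 [Fintype V] [Fintype E] [DecidableEq V]
    (s r : E → V)
    (hsourcefree : ∀ v : V, ∃ e : E, r e = v)
    (hnosourcecycle : ∀ c : List E, IsCycle s r c →
      ¬ ∀ v ∈ c.map s, (Finset.univ.filter fun e => r e = v).card = 1)
    (a : ℕ) (ha : 0 < a) :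
    ∃ m : V → ℕ, (∀ v : V, a ≤ m v) ∧
      ∀ v : V, (a : ℤ) ≤
        Matrix.mulVec (Matrix.transpose (incMatrix s r) - 1) (fun w => (m w : ℤ)) v :=
  stmt_8_general s r hsourcefree hnosourcecycle a
end

section
/- Let E be a finite source-free directed graph containing no source cycle. Then for every pair of positive integers m > n there exists an element x of the free abelian monoid on E⁰ such that m·[Σ_{v∈E⁰} v] + [x] = n·[Σ_{v∈E⁰} v] in M_E. -/
/-!
Write `𝟙` for the sum of all vertices. Expanding every regular vertex along its outgoing edges
turns `𝟙` into a vector dominating the in-degree vector, which is `≥ 𝟙` as `E` is source-free;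
hence `[𝟙] = [𝟙] + [w]` with `w u ≥ 1` at every vertex `u` with two or more incoming edges.
Walking backwards from a vertex `v` along incoming edges eventually runs around a cycle, which is
not a source cycle, so `v` has an ancestor `u` of in-degree at least two; and `[u] = [v] + c`
whenever `v` is reachable from `u`. Thus `[w]` dominates every `[v]`, and summing over the
vertices gives `[𝟙] = [𝟙] + |E⁰| • [w] = 2 • [𝟙] + c`. Finally, `a = 2 • a + b` implies
`n • a = m • a + (m - n) • b` for `0 < n ≤ m`.
-/

variable {V E : Type}

/-- The defining relations of the graph monoid `M_E` on the free abelian monoid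
`V → ℕ` on the vertices: `v = Σ_{e ∈ s⁻¹(v)} r e` for each regular vertex `v`. -/
def graphRel [Fintype E] [DecidableEq V] (s r : E → V) (x y : V → ℕ) : Prop :=
  ∃ v : V, (∃ e : E, s e = v) ∧ x = Pi.single v 1 ∧
    y = ∑ e : E, if s e = v then Pi.single (r e) 1 else 0

/-- The graph monoid `M_E`: the quotient of the free abelian monoid on the vertices by
the monoid congruence generated by the relations `v = Σ_{e ∈ s⁻¹(v)} r e`. -/
def graphMonoidMk [Fintype E] [DecidableEq V] (s r : E → V) :
    (V → ℕ) →+ (addConGen (graphRel s r)).Quotient :=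
  (addConGen (graphRel s r)).mk'

open Function Finset

namespace Function

theorem exists_iterate_mem_periodicPts_s10 {α : Type*} [Finite α] (f : α → α) (x : α) :
    ∃ k, f^[k] x ∈ periodicPts f := by
  obtain ⟨a, b, hne, hab⟩ := Finite.exists_ne_map_eq_of_infinite (f^[·] x)
  wlog hlt : a < b generalizing a b
  · exact this b a hne.symm hab.symm (by omega)
  refine ⟨a, mk_mem_periodicPts (n := b - a) (by omega) ?_⟩
  rw [IsPeriodicPt, IsFixedPt, ← iterate_add_apply, Nat.sub_add_cancel hlt.le]
  exact hab.symm

end Function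

section AddCommMonoid

variable {M : Type*} [AddCommMonoid M] {a b : M}

theorem eq_add_nsmul_of_eq_add (h : a = a + b) (k : ℕ) : a = a + k • b := by
  induction k with
  | zero => rw [zero_nsmul, add_zero]
  | succ k ih => rw [succ_nsmul, ← add_assoc, ← ih, ← h]

theorem nsmul_eq_succ_nsmul_add_of_eq_two_nsmul_add (h : a = 2 • a + b) {k : ℕ} (hk : 0 < k) :
    k • a = (k + 1) • a + b := by
  obtain ⟨k, rfl⟩ := Nat.exists_eq_succ_of_ne_zero hk.ne'
  calc (k + 1) • a = k • a + (2 • a + b) := by rw [succ_nsmul, ← h]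
    _ = (k + 2) • a + b := by rw [add_nsmul, add_assoc]

theorem nsmul_add_nsmul_eq_of_eq_two_nsmul_add (h : a = 2 • a + b) {m n : ℕ} (hn : 0 < n)
    (hnm : n ≤ m) : m • a + (m - n) • b = n • a := by
  obtain ⟨d, rfl⟩ := Nat.exists_eq_add_of_le hnm
  rw [Nat.add_sub_cancel_left]
  clear hnm
  induction d with
  | zero => rw [zero_nsmul, add_zero, add_zero]
  | succ d ih =>
    rw [nsmul_eq_succ_nsmul_add_of_eq_two_nsmul_add h (by omega : 0 < n + d)] at ih
    rw [← ih, succ_nsmul b, ← add_assoc, add_right_comm _ b, add_assoc n]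

theorem exists_eq_two_nsmul_add_of_eq_add {ι : Type*} [Fintype ι] (f : ι → M) (ha : a = ∑ i, f i)
    (hab : a = a + b) (hb : ∀ i, ∃ c, b = f i + c) : ∃ c, a = 2 • a + c := by
  choose c hc using hb
  refine ⟨∑ i, c i, ?_⟩
  calc a = a + ∑ _i : ι, b := by rw [sum_const, card_univ, ← eq_add_nsmul_of_eq_add hab]
    _ = 2 • a + ∑ i, c i := by
      rw [sum_congr rfl fun i _ => hc i, sum_add_distrib, ← ha, two_nsmul, add_assoc]

end AddCommMonoid

def HasEdge (s r : E → V) (u v : V) : Prop := ∃ e, s e = u ∧ r e = v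

/-- `p z` is an edge into `z`, so `s ∘ p` walks edges backwards: listing the edges `p y` for `y`
in the periodic orbit of `x` in reverse order gives a cycle. -/
theorem isCycle_ofFn_iterate {s r : E → V} {p : V → E} (hp : ∀ z, r (p z) = z) {x : V}
    (hx : x ∈ periodicPts (s ∘ p)) :
    IsCycle s r (List.ofFn fun i : Fin (minimalPeriod (s ∘ p) x) =>
      p ((s ∘ p)^[minimalPeriod (s ∘ p) x - 1 - i] x)) := by
  set q := s ∘ p
  set n := minimalPeriod q x
  have hn : 0 < n := minimalPeriod_pos_of_mem_periodicPts hx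
  have hs : ∀ k, s (p (q^[k] x)) = q^[k] (q x) := fun k =>
    (iterate_succ_apply' q k x).symm.trans (iterate_succ_apply q k x)
  refine ⟨by simpa using hn, fun i hi => ?_, ?_⟩
  · simp only [List.get_eq_getElem, List.getElem_ofFn, hp, hs]
    rw [List.length_ofFn] at hi ⊢
    rw [← iterate_succ_apply]
    rcases Nat.lt_or_ge (i + 1) n with hlt | hge
    · rw [Nat.mod_eq_of_lt hlt]
      congr 1
      omega
    · rw [show i + 1 = n by omega, Nat.mod_self, Nat.sub_zero, show (n - 1).succ = n by omega,
        iterate_minimalPeriod, show n - 1 - i = 0 by omega, iterate_zero_apply]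
  · rw [List.map_ofFn, List.nodup_ofFn]
    intro i j hij
    simp only [comp_apply, hs] at hij
    have hqx : minimalPeriod q (q x) = n := minimalPeriod_apply hx
    have := (iterate_eq_iterate_iff_of_lt_minimalPeriod (by omega) (by omega)).1 hij
    exact Fin.ext (by omega)

section GraphMonoid

variable [Fintype E] [DecidableEq V]

def inDegree (r : E → V) (v : V) : ℕ := #{e | r e = v}

theorem exists_two_le_inDegree_reflTransGen [Finite V] {s r : E → V} (hsf : ∀ v, ∃ e, r e = v)
    (hns : ∀ c, IsCycle s r c → ¬ ∀ v ∈ c.map s, inDegree r v = 1) (v : V) :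
    ∃ u, 2 ≤ inDegree r u ∧ Relation.ReflTransGen (HasEdge s r) u v := by
  choose p hp using hsf
  set q := s ∘ p
  have hanc : ∀ k, Relation.ReflTransGen (HasEdge s r) (q^[k] v) v := by
    intro k
    induction k with
    | zero => exact .refl
    | succ k ih => exact .head ⟨p _, (iterate_succ_apply' q k v).symm, hp _⟩ ih
  obtain ⟨k, hk⟩ := exists_iterate_mem_periodicPts_s10 q v
  have hcyc := hns _ (isCycle_ofFn_iterate hp hk)
  push Not at hcyc
  obtain ⟨u, hu, hu1⟩ := hcyc
  rw [List.map_ofFn, List.mem_ofFn] at hu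
  obtain ⟨i, hi⟩ := hu
  have hu : u = q^[minimalPeriod q (q^[k] v) - 1 - i + 1 + k] v := by
    rw [← hi, iterate_add_apply, iterate_succ_apply']
    rfl
  have : 0 < inDegree r u := card_pos.2 ⟨p u, by simp [hp]⟩
  exact ⟨u, by omega, hu ▸ hanc _⟩

def outSum (s r : E → V) (v : V) : V → ℕ := ∑ e, if s e = v then Pi.single (r e) 1 else 0

theorem graphMonoidMk_single_eq_outSum {s r : E → V} {v : V} (hv : ∃ e, s e = v) :
    graphMonoidMk s r (Pi.single v 1) = graphMonoidMk s r (outSum s r v) :=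
  (AddCon.eq _).2 (AddConGen.Rel.of _ _ ⟨v, hv, rfl, rfl⟩)

theorem outSum_eq_zero {s r : E → V} {v : V} (hv : ¬∃ e, s e = v) : outSum s r v = 0 :=
  sum_eq_zero fun e _ => if_neg fun he => hv ⟨e, he⟩

theorem single_le_outSum (s r : E → V) (e : E) : Pi.single (r e) 1 ≤ outSum s r (s e) := by
  simpa [outSum] using single_le_sum (f := fun e' => if s e' = s e then Pi.single (r e') 1 else 0)
    (fun _ _ => zero_le) (mem_univ e)

theorem sum_outSum [Fintype V] (s r : E → V) : ∑ v, outSum s r v = inDegree r := by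
  ext z
  simp only [outSum]
  rw [sum_comm]
  simp only [sum_ite_eq, mem_univ, if_true, Finset.sum_apply, Pi.single_apply, inDegree,
    card_filter, eq_comm (a := z)]

theorem exists_graphMonoidMk_single_eq_add_of_reflTransGen {s r : E → V} {u v : V}
    (h : Relation.ReflTransGen (HasEdge s r) u v) :
    ∃ c, graphMonoidMk s r (Pi.single u 1) = graphMonoidMk s r (Pi.single v 1) + c := by
  induction h with
  | refl => exact ⟨0, (add_zero _).symm⟩
  | tail _ hbc ih =>
    obtain ⟨c, hc⟩ := ih
    obtain ⟨e, rfl, rfl⟩ := hbc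
    obtain ⟨d, hd⟩ := exists_add_of_le (single_le_outSum s r e)
    refine ⟨graphMonoidMk s r d + c, ?_⟩
    rw [hc, graphMonoidMk_single_eq_outSum ⟨e, rfl⟩, hd, map_add, add_assoc]

theorem exists_graphMonoidMk_one_eq_add [Fintype V] {s r : E → V} (hsf : ∀ v, ∃ e, r e = v) :
    ∃ w : V → ℕ, graphMonoidMk s r 1 = graphMonoidMk s r 1 + graphMonoidMk s r w ∧
      ∀ u, 2 ≤ inDegree r u → Pi.single u 1 ≤ w := by
  have hvertex : ∀ v, ∃ t,
      graphMonoidMk s r (Pi.single v 1) = graphMonoidMk s r (outSum s r v + t) := by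
    intro v
    by_cases hv : ∃ e, s e = v
    · exact ⟨0, by rw [add_zero, graphMonoidMk_single_eq_outSum hv]⟩
    · exact ⟨Pi.single v 1, by rw [outSum_eq_zero hv, zero_add]⟩
  choose t ht using hvertex
  have hone : 1 ≤ inDegree r := fun v =>
    card_pos.2 (by obtain ⟨e, he⟩ := hsf v; exact ⟨e, by simp [he]⟩)
  refine ⟨inDegree r - 1 + ∑ v, t v, ?_, fun u hu => le_add_right fun z => ?_⟩
  · calc graphMonoidMk s r 1 = ∑ v, graphMonoidMk s r (Pi.single v 1) := by
          rw [← map_sum, univ_sum_single]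
          rfl
      _ = graphMonoidMk s r (inDegree r + ∑ v, t v) := by
          rw [sum_congr rfl fun v _ => ht v, ← map_sum, sum_add_distrib, sum_outSum]
      _ = graphMonoidMk s r 1 + graphMonoidMk s r (inDegree r - 1 + ∑ v, t v) := by
          rw [← map_add, ← add_assoc, add_tsub_cancel_of_le hone]
  · rcases eq_or_ne z u with rfl | hz
    · simp only [Pi.single_eq_same, Pi.sub_apply, Pi.one_apply]
      omega
    · simp [hz]

theorem exists_graphMonoidMk_one_eq_two_nsmul_add [Fintype V] {s r : E → V}
    (hsf : ∀ v, ∃ e, r e = v) (hns : ∀ c, IsCycle s r c → ¬ ∀ v ∈ c.map s, inDegree r v = 1) :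
    ∃ c, graphMonoidMk s r 1 = 2 • graphMonoidMk s r 1 + c := by
  obtain ⟨w, hw, hwu⟩ := exists_graphMonoidMk_one_eq_add (s := s) hsf
  have hdom : ∀ v, ∃ c, graphMonoidMk s r w = graphMonoidMk s r (Pi.single v 1) + c := by
    intro v
    obtain ⟨u, hu, huv⟩ := exists_two_le_inDegree_reflTransGen hsf hns v
    obtain ⟨d, hd⟩ := exists_add_of_le (hwu u hu)
    obtain ⟨c, hc⟩ := exists_graphMonoidMk_single_eq_add_of_reflTransGen huv
    exact ⟨c + graphMonoidMk s r d, by rw [hd, map_add, hc, add_assoc]⟩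
  refine exists_eq_two_nsmul_add_of_eq_add _ ?_ hw hdom
  rw [← map_sum, univ_sum_single]
  rfl

end GraphMonoid

/-- Let `E` be a finite source-free directed graph containing no source
cycle.  Then for every pair of positive integers `m > n` there is an element `x` of the
free abelian monoid on `E⁰` with
`m • [Σ_{v ∈ E⁰} v] + [x] = n • [Σ_{v ∈ E⁰} v]` in `M_E`. -/
theorem stmt_10 [Fintype V] [Fintype E] [DecidableEq V]
    (s r : E → V)
    (hsourcefree : ∀ v : V, ∃ e : E, r e = v)
    (hnosourcecycle : ∀ c : List E, IsCycle s r c →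
      ¬ ∀ v ∈ c.map s, (Finset.univ.filter fun e => r e = v).card = 1) :
    ∀ m n : ℕ, 0 < n → n < m →
      ∃ x : V → ℕ,
        m • graphMonoidMk s r (∑ v : V, Pi.single v 1) + graphMonoidMk s r x =
          n • graphMonoidMk s r (∑ v : V, Pi.single v 1) := by
  intro m n hn hnm
  obtain ⟨c, hc⟩ := exists_graphMonoidMk_one_eq_two_nsmul_add hsourcefree hnosourcecycle
  obtain ⟨x, rfl⟩ := AddCon.mk'_surjective c
  refine ⟨(m - n) • x, ?_⟩
  rw [univ_sum_single (fun _ => 1), map_nsmul]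
  exact nsmul_add_nsmul_eq_of_eq_two_nsmul_add hc hn hnm.le
end

section
/- Let E be a finite directed graph and let E = E₀ → E₁ → ⋯ → E_ℓ be any sequence of graphs in which each E_{i+1} is the source elimination graph of E_i at some source, and such that E_ℓ is source-free. Then: (1) E_ℓ can be taken to be nonempty and source-free if and only if E contains a cycle; and (2) if E contains a cycle, then E_ℓ⁰ = ⋃_c T_E(c), where c runs over all cycles of E, and E_ℓ¹ consists of all edges of E whose source and range both lie in E_ℓ⁰. -/
variable {V E : Type}

/-- The reachability relation `u ≥ w` of the graph: `u = w` or there is a path from `u`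
to `w`. -/
def Reaches (s r : E → V) : V → V → Prop :=
  Relation.ReflTransGen fun a b => ∃ e : E, s e = a ∧ r e = b

/-- A step-by-step source elimination process, recorded by the vertex sets
`S 0 ⊇ S 1 ⊇ ⋯` of the successive subgraphs: the subgraph with vertex set `S` has edge
set `{e : s e ∈ S}`, and at each step a source of the current subgraph (a vertex
receiving no edge of the subgraph) is deleted together with the edges it emits. -/
def IsElimSeq [Fintype V] [DecidableEq V] (s r : E → V) (ℓ : ℕ) (S : ℕ → Finset V) : Prop :=
  S 0 = Finset.univ ∧
    ∀ i < ℓ, ∃ v ∈ S i, (¬ ∃ e : E, s e ∈ S i ∧ r e = v) ∧ S (i + 1) = (S i).erase v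

/-- From a nonempty "source-free" vertex set one can extract a cycle reaching any
given vertex of the set. -/
lemma extract_cycle [Fintype V] (s r : E → V) (T : Finset V)
    (hsf : ∀ v ∈ T, ∃ e : E, s e ∈ T ∧ r e = v)
    (w : V) (hw : w ∈ T) :
    ∃ c : List E, IsCycle s r c ∧ ∃ u ∈ c.map s, Reaches s r u w := by
  classical
  have hne : Nonempty E := ⟨(hsf w hw).choose⟩
  set ed : V → E := fun v =>
    if h : ∃ e : E, s e ∈ T ∧ r e = v then h.choose else Classical.arbitrary E with hedf
  have hed : ∀ v ∈ T, s (ed v) ∈ T ∧ r (ed v) = v := by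
    intro v hv
    have h : ∃ e : E, s e ∈ T ∧ r e = v := hsf v hv
    simp only [hedf, dif_pos h]
    exact h.choose_spec
  set u : ℕ → V := fun n => (fun v => s (ed v))^[n] w with huf
  have hstep : ∀ n, u (n + 1) = s (ed (u n)) := fun n => Function.iterate_succ_apply' _ _ _
  have huT : ∀ n, u n ∈ T := by
    intro n; induction n with
    | zero => exact hw
    | succ n ih => rw [hstep]; exact (hed _ ih).1
  have hr : ∀ n, r (ed (u n)) = u n := fun n => (hed _ (huT n)).2
  have hreach : ∀ n, Reaches s r (u n) w := by
    intro n; induction n with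
    | zero => exact Relation.ReflTransGen.refl
    | succ n ih => exact Relation.ReflTransGen.head ⟨ed (u n), (hstep n).symm, hr n⟩ ih
  obtain ⟨a, b, hab, hu⟩ := Finite.exists_ne_map_eq_of_infinite u
  have hex : ∃ m, ∃ j, j < m ∧ u j = u m := by
    rcases lt_or_gt_of_ne hab with h | h
    · exact ⟨b, a, h, hu⟩
    · exact ⟨a, b, h, hu.symm⟩
  set m := Nat.find hex with hm
  obtain ⟨j, hjm, hujm⟩ := Nat.find_spec hex
  have hinj : ∀ a b, a < b → b < m → u a ≠ u b := by
    intro a b h1 h2 h3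
    exact Nat.find_min hex h2 ⟨a, h1, h3⟩
  set n := m - j with hn
  have hnpos : 0 < n := Nat.sub_pos_of_lt hjm
  have hnm : n ≤ m := Nat.sub_le _ _
  set c : List E := (List.range n).map (fun i => ed (u (m - 1 - i))) with hc
  have hlen : c.length = n := by simp [hc]
  have hget : ∀ (i : ℕ) (hi : i < c.length), c.get ⟨i, hi⟩ = ed (u (m - 1 - i)) := by
    intro i hi
    simp [hc]
  have hsget : ∀ (i : ℕ) (hi : i < c.length), s (c.get ⟨i, hi⟩) = u (m - i) := by
    intro i hi
    rw [hget i hi]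
    have hi' : i < n := by rwa [hlen] at hi
    have h1 : m - 1 - i + 1 = m - i := by omega
    rw [← h1, hstep]
  have hcyc : IsCycle s r c := by
    refine ⟨by rw [hlen]; exact hnpos, ?_, ?_⟩
    · intro i hi
      rw [hget i hi, hr, hsget]
      have hi' : i < n := by rwa [hlen] at hi
      rw [hlen]
      rcases Nat.lt_or_ge (i + 1) n with h | h
      · rw [Nat.mod_eq_of_lt h]
        congr 1; omega
      · have hieq : i + 1 = n := by omega
        rw [hieq, Nat.mod_self]
        have : m - 1 - i = j := by omega
        rw [this, Nat.sub_zero, hujm]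
    · have hmap : c.map s = (List.range n).map (fun i => u (m - i)) := by
        apply List.ext_get
        · simp [hc]
        · intro i h1 h2
          have hi : i < c.length := by simpa using h1
          rw [show (c.map s).get ⟨i, h1⟩ = s (c.get ⟨i, hi⟩) by simp]
          have : ((List.range n).get ⟨i, by simpa using h2⟩) = i := by simp
          rw [show ∀ (h : i < ((List.range n).map (fun i => u (m - i))).length),
              ((List.range n).map (fun i => u (m - i))).get ⟨i, h⟩ = u (m - i) from ?_]
          · exact hsget i hi
          · intro h; simp
      rw [hmap]
      apply List.Nodup.map_on ?_ (List.nodup_range (n := n))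
      intro x hx y hy hxy
      simp only [List.mem_range] at hx hy
      by_contra hne'
      rcases lt_or_gt_of_ne hne' with hlt | hlt
      · rcases Nat.eq_zero_or_pos x with hx0 | hx0
        · subst hx0
          rw [Nat.sub_zero, ← hujm] at hxy
          exact hinj j (m - y) (by omega) (by omega) hxy
        · exact hinj (m - y) (m - x) (by omega) (by omega) hxy.symm
      · rcases Nat.eq_zero_or_pos y with hy0 | hy0
        · subst hy0
          rw [Nat.sub_zero, ← hujm] at hxy
          exact hinj j (m - x) (by omega) (by omega) hxy.symm
        · exact hinj (m - x) (m - y) (by omega) (by omega) hxy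
  refine ⟨c, hcyc, u m, ?_, hreach m⟩
  have h0 : 0 < c.length := by rw [hlen]; exact hnpos
  have := hsget 0 h0
  rw [Nat.sub_zero] at this
  rw [← this]
  exact List.mem_map_of_mem (f := s) (c.get_mem _)

/-- invariant: subgraph edges stay inside. -/
lemma elim_closed [Fintype V] [DecidableEq V] (s r : E → V) (ℓ : ℕ) (S : ℕ → Finset V)
    (hE : IsElimSeq s r ℓ S) : ∀ i ≤ ℓ, ∀ e : E, s e ∈ S i → r e ∈ S i := by
  intro i
  induction i with
  | zero => intro _ e _; rw [hE.1]; exact Finset.mem_univ _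
  | succ i ih =>
    intro hi e he
    obtain ⟨v, hv, hvsrc, hSeq⟩ := hE.2 i (by omega)
    rw [hSeq] at he ⊢
    have hsi : s e ∈ S i := Finset.mem_of_mem_erase he
    have hri : r e ∈ S i := ih (by omega) e hsi
    refine Finset.mem_erase.2 ⟨?_, hri⟩
    intro hrv
    exact hvsrc ⟨e, hsi, hrv⟩

/-- cycle vertices are never eliminated. -/
lemma cycle_mem_elim [Fintype V] [DecidableEq V] (s r : E → V) (ℓ : ℕ) (S : ℕ → Finset V)
    (hE : IsElimSeq s r ℓ S) (c : List E) (hc : IsCycle s r c) :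
    ∀ i ≤ ℓ, ∀ (k : ℕ) (hk : k < c.length), s (c.get ⟨k, hk⟩) ∈ S i := by
  obtain ⟨hpos, hcyc, _⟩ := hc
  intro i
  induction i with
  | zero => intro _ k hk; rw [hE.1]; exact Finset.mem_univ _
  | succ i ih =>
    intro hi k hk
    obtain ⟨v, hv, hvsrc, hSeq⟩ := hE.2 i (by omega)
    rw [hSeq]
    refine Finset.mem_erase.2 ⟨?_, ih (by omega) k hk⟩
    intro hkv
    set p : ℕ := (k + c.length - 1) % c.length with hp
    have hpl : p < c.length := Nat.mod_lt _ hpos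
    have hpk : (p + 1) % c.length = k := by
      rw [hp, Nat.mod_add_mod]
      have h1 : k + c.length - 1 + 1 = k + c.length := by omega
      rw [h1, Nat.add_mod_right, Nat.mod_eq_of_lt hk]
    have hre := hcyc p hpl
    rw [show (⟨(p + 1) % c.length, Nat.mod_lt _ hpos⟩ : Fin c.length) = ⟨k, hk⟩ from
      Fin.ext hpk] at hre
    apply hvsrc
    exact ⟨c.get ⟨p, hpl⟩, ih (by omega) p hpl, hre ▸ hkv⟩

/-- Given a cycle, a run of the source elimination process terminates in a nonempty
source-free subgraph. -/
lemma exists_elim_of_cycle [Fintype V] [DecidableEq V] (s r : E → V)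
    (c : List E) (hc : IsCycle s r c) :
    ∃ (ℓ : ℕ) (S : ℕ → Finset V), IsElimSeq s r ℓ S ∧ (S ℓ).Nonempty ∧
      ∀ v ∈ S ℓ, ∃ e : E, s e ∈ S ℓ ∧ r e = v := by
  classical
  obtain ⟨hpos, hcyc, _⟩ := hc
  set P : Finset V → Prop := fun T => ∃ v ∈ T, ¬ ∃ e : E, s e ∈ T ∧ r e = v with hP
  set step : Finset V → Finset V := fun T => if h : P T then T.erase h.choose else T with hstepf
  set S : ℕ → Finset V := fun n => step^[n] Finset.univ with hS
  have hS0 : S 0 = Finset.univ := rfl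
  have hSsucc : ∀ n, S (n + 1) = step (S n) := fun n => Function.iterate_succ_apply' _ _ _
  have hcycmem : ∀ n, ∀ (k : ℕ) (hk : k < c.length), s (c.get ⟨k, hk⟩) ∈ S n := by
    intro n
    induction n with
    | zero => intro k hk; exact Finset.mem_univ _
    | succ n ih =>
      intro k hk
      rw [hSsucc]
      by_cases h : P (S n)
      · rw [hstepf]; simp only [dif_pos h]
        set v := h.choose with hv
        obtain ⟨hvmem, hvsrc⟩ := h.choose_spec
        refine Finset.mem_erase.2 ⟨?_, ih k hk⟩
        intro hkv
        set p : ℕ := (k + c.length - 1) % c.length with hp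
        have hpl : p < c.length := Nat.mod_lt _ hpos
        have hpk : (p + 1) % c.length = k := by
          rw [hp, Nat.mod_add_mod]
          have h1 : k + c.length - 1 + 1 = k + c.length := by omega
          rw [h1, Nat.add_mod_right, Nat.mod_eq_of_lt hk]
        have hre := hcyc p hpl
        rw [show (⟨(p + 1) % c.length, Nat.mod_lt _ hpos⟩ : Fin c.length) = ⟨k, hk⟩ from
          Fin.ext hpk] at hre
        exact hvsrc ⟨c.get ⟨p, hpl⟩, ih p hpl, hre ▸ hkv⟩
      · rw [hstepf]; simp only [dif_neg h]; exact ih k hk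
  have hSne : ∀ n, (S n).Nonempty := fun n => ⟨_, hcycmem n 0 hpos⟩
  have hcard : ∀ n, (∀ i < n, P (S i)) → (S n).card + n ≤ Fintype.card V := by
    intro n
    induction n with
    | zero => intro _; simpa using Finset.card_le_univ (S 0)
    | succ n ih =>
      intro hall
      have h1 := ih (fun i hi => hall i (by omega))
      have h2 : P (S n) := hall n (by omega)
      have h3 : S (n + 1) = (S n).erase h2.choose := by
        rw [hSsucc, hstepf]; simp only [dif_pos h2]
      have h4 : (S (n + 1)).card < (S n).card := by
        rw [h3]
        exact Finset.card_erase_lt_of_mem h2.choose_spec.1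
      omega
  have hterm : ∃ n, ¬ P (S n) := by
    by_contra hcon
    push_neg at hcon
    have := hcard (Fintype.card V) (fun i _ => hcon i)
    have := (hSne (Fintype.card V)).card_pos
    omega
  set ℓ := Nat.find hterm with hl
  refine ⟨ℓ, S, ⟨hS0, ?_⟩, hSne ℓ, ?_⟩
  · intro i hi
    have hPi : P (S i) := by
      by_contra h
      have : ℓ ≤ i := Nat.find_le h
      omega
    refine ⟨hPi.choose, hPi.choose_spec.1, hPi.choose_spec.2, ?_⟩
    rw [hSsucc, hstepf]; simp only [dif_pos hPi]
  · have hnP : ¬ P (S ℓ) := Nat.find_spec hterm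
    rw [hP] at hnP
    intro v hv
    by_contra h
    exact hnP ⟨v, hv, h⟩

/-- Let `E` be a finite directed graph, and consider sequences
`E = E₀ → E₁ → ⋯ → E_ℓ` of source eliminations.  Then:
(1) there exists such a sequence whose last graph `E_ℓ` is nonempty and source-free if
    and only if `E` contains a cycle; and
(2) for any such sequence ending in a source-free graph `E_ℓ`, if `E` contains a cycle,
    then `E_ℓ⁰ = ⋃_c T_E(c)` (`c` running over all cycles of `E`, and
    `T_E(c) = {w : u ≥ w for some vertex u of c}`), and the edges of `E_ℓ` are exactly
    the edges of `E` whose source and range both lie in `E_ℓ⁰`. -/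
theorem stmt_12 [Fintype V] [Fintype E] [DecidableEq V] (s r : E → V) :
    ((∃ (ℓ : ℕ) (S : ℕ → Finset V), IsElimSeq s r ℓ S ∧ (S ℓ).Nonempty ∧
        ∀ v ∈ S ℓ, ∃ e : E, s e ∈ S ℓ ∧ r e = v) ↔
      ∃ c : List E, IsCycle s r c) ∧
    (∀ (ℓ : ℕ) (S : ℕ → Finset V), IsElimSeq s r ℓ S →
      (∀ v ∈ S ℓ, ∃ e : E, s e ∈ S ℓ ∧ r e = v) →
      (∃ c : List E, IsCycle s r c) →
      ((S ℓ : Set V) =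
          {w : V | ∃ c : List E, IsCycle s r c ∧ ∃ u ∈ c.map s, Reaches s r u w} ∧
        ∀ e : E, s e ∈ S ℓ ↔ s e ∈ S ℓ ∧ r e ∈ S ℓ)) := by
  constructor
  · constructor
    · rintro ⟨ℓ, S, hE, ⟨w, hw⟩, hsf⟩
      obtain ⟨c, hc, -⟩ := extract_cycle s r (S ℓ) hsf w hw
      exact ⟨c, hc⟩
    · rintro ⟨c, hc⟩
      exact exists_elim_of_cycle s r c hc
  · intro ℓ S hE hsf _
    have hcl : ∀ e : E, s e ∈ S ℓ → r e ∈ S ℓ := elim_closed s r ℓ S hE ℓ le_rfl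
    have hmono : ∀ a b : V, Reaches s r a b → a ∈ S ℓ → b ∈ S ℓ := by
      intro a b hab ha
      induction hab with
      | refl => exact ha
      | tail _ h2 ih =>
        obtain ⟨e, he1, he2⟩ := h2
        rw [← he2]
        exact hcl e (he1 ▸ ih)
    refine ⟨?_, fun e => ⟨fun h => ⟨h, hcl e h⟩, fun h => h.1⟩⟩
    ext w
    simp only [Finset.mem_coe, Set.mem_setOf_eq]
    constructor
    · intro hw
      exact extract_cycle s r (S ℓ) hsf w hw
    · rintro ⟨c, hc, u, hu, hr⟩
      obtain ⟨e, he, rfl⟩ := List.mem_map.1 hu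
      obtain ⟨k, hk⟩ := List.mem_iff_get.1 he
      have := cycle_mem_elim s r ℓ S hE c hc ℓ le_rfl k k.isLt
      rw [Fin.eta, hk] at this
      exact hmono _ _ hr this
end

section
/- Every stably finite unital ring has Unbounded Generating Number: if R is a unital ring such that for every positive integer n and every right R-module K, R^n ≅ R^n ⊕ K implies K = 0, then for all positive integers m and n and every right R-module K, R^n ≅ R^m ⊕ K implies n ≥ m. -/
/-!
If `n < m`, write `m = n + k` with `k > 0`. Splitting `R^m = R^n ⊕ R^k`, an isomorphism
`R^n ≅ R^m ⊕ K` becomes `R^n ≅ R^n ⊕ (R^k ⊕ K)`, so stable finiteness forces the nonzero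
module `R^k ⊕ K` to vanish.
-/

namespace LinearEquiv

variable {S M K : Type*} [Semiring S] [AddCommMonoid M] [Module S M]
  [AddCommMonoid K] [Module S K]

variable (S M) in
def finAddArrowProd (n k : ℕ) : (Fin (n + k) → M) ≃ₗ[S] (Fin n → M) × (Fin k → M) :=
  funCongrLeft S M finSumFinEquiv ≪≫ₗ sumArrowLequivProdArrow _ _ S M

def finArrowProdAssocOfAdd {n k : ℕ} (e : (Fin n → M) ≃ₗ[S] (Fin (n + k) → M) × K) :
    (Fin n → M) ≃ₗ[S] (Fin n → M) × ((Fin k → M) × K) :=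
  e ≪≫ₗ (finAddArrowProd S M n k).prodCongr (refl S K) ≪≫ₗ prodAssoc S _ _ _

end LinearEquiv

/-- Every stably finite unital (nonzero) ring has Unbounded Generating
Number: if for every positive integer `n` and every right `R`-module `K`,
`R^n ≅ R^n ⊕ K` implies `K = 0`, then for all positive integers `m`, `n` and every right
`R`-module `K`, `R^n ≅ R^m ⊕ K` implies `n ≥ m`.  Right `R`-modules are modules over
`Rᵐᵒᵖ`, and `K = 0` is expressed as `Subsingleton K`. -/
theorem stmt_16 (R : Type) [Ring R] [Nontrivial R]
    (hsf : ∀ n : ℕ, 0 < n → ∀ (K : Type) [AddCommGroup K] [Module Rᵐᵒᵖ K],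
      Nonempty ((Fin n → R) ≃ₗ[Rᵐᵒᵖ] ((Fin n → R) × K)) → Subsingleton K) :
    ∀ m n : ℕ, 0 < m → 0 < n → ∀ (K : Type) [AddCommGroup K] [Module Rᵐᵒᵖ K],
      Nonempty ((Fin n → R) ≃ₗ[Rᵐᵒᵖ] ((Fin m → R) × K)) → m ≤ n := by
  intro m n _ hn K _ _ ⟨e⟩
  by_contra! hnm
  obtain ⟨k, rfl⟩ := Nat.exists_eq_add_of_lt hnm
  exact not_subsingleton ((Fin (k + 1) → R) × K)
    (hsf n hn _ ⟨LinearEquiv.finArrowProdAssocOfAdd e⟩)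
end

section
/- Let E be a finite no-exit directed graph (no cycle of E has an exit). Then the graph monoid M_E is a cancellative monoid: for all a, b, c ∈ M_E, a + c = b + c implies a = b. -/
/-!
In a no-exit graph a vertex on a cycle has exactly one outgoing edge, so the relations
identify all vertices of that cycle, and every vertex reachable from it lies on the cycle.
From any other regular vertex each edge leads to a vertex with strictly fewer reachable
vertices, so unfolding the relations terminates: in `M_E` every vertex equals a sum of sinks
and of chosen representatives of cycles. This normal form respects the relations and is a
section of the quotient map `ℕ^V → M_E`, so `M_E` embeds into the cancellative monoid `ℕ^V`.
-/

variable {V E : Type}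

/-- An exit for the cycle `c`: an edge `f` with `s f = s eᵢ` and `f ≠ eᵢ` for some edge
`eᵢ` of `c`. -/
def HasExit (s r : E → V) (c : List E) : Prop :=
  ∃ (f : E) (i : ℕ) (hi : i < c.length), s f = s (c.get ⟨i, hi⟩) ∧ f ≠ c.get ⟨i, hi⟩

namespace GraphMonoid

open Relation

variable (s r : E → V)

def Adj (v w : V) : Prop := ∃ e, s e = v ∧ r e = w

def OnCycle (v : V) : Prop := TransGen (Adj s r) v v

def IsWalk : V → List E → V → Prop
  | v, [], w => v = w
  | v, e :: p, w => s e = v ∧ IsWalk (r e) p w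

variable {s r}

theorem isWalk_append {p q : List E} {v w : V} :
    IsWalk s r v (p ++ q) w ↔ ∃ u, IsWalk s r v p u ∧ IsWalk s r u q w := by
  induction p generalizing v with
  | nil => exact ⟨fun h => ⟨v, rfl, h⟩, fun ⟨_, hvu, h⟩ => hvu ▸ h⟩
  | cons e p ih => simp only [List.cons_append, IsWalk, ih, and_assoc, exists_and_left]

theorem IsWalk.source_head {p : List E} {v w : V} (h : IsWalk s r v p w) (hp : 0 < p.length) :
    s p[0] = v := by
  cases p with
  | nil => contradiction
  | cons e p => exact h.1

theorem IsWalk.take_drop {p : List E} {v w : V} (h : IsWalk s r v p w) {k : ℕ}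
    (hk : k < p.length) :
    IsWalk s r v (p.take k) (s p[k]) ∧ IsWalk s r (s p[k]) (p.drop k) w := by
  rw [← List.take_append_drop k p, isWalk_append] at h
  obtain ⟨u, hvu, huw⟩ := h
  rw [List.drop_eq_getElem_cons hk] at huw ⊢
  exact ⟨huw.1 ▸ hvu, rfl, huw.2⟩

theorem exists_isWalk_of_reflTransGen {v w : V} (h : ReflTransGen (Adj s r) v w) :
    ∃ p, IsWalk s r v p w := by
  induction h using ReflTransGen.head_induction_on with
  | refl => exact ⟨[], rfl⟩
  | head hstep _ ih =>
    obtain ⟨e, he, rfl⟩ := hstep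
    obtain ⟨p, hp⟩ := ih
    exact ⟨e :: p, he, hp⟩

theorem isCycle_of_isWalk {l : List E} {v : V} (hl : l ≠ []) (hwalk : IsWalk s r v l v)
    (hnodup : (l.map s).Nodup) : IsCycle s r l := by
  have h0 : 0 < l.length := List.length_pos_iff.2 hl
  refine ⟨h0, fun i hi => ?_, hnodup⟩
  have hnext : IsWalk s r (r l[i]) (l.drop (i + 1)) v := by
    have := (hwalk.take_drop hi).2
    rw [List.drop_eq_getElem_cons hi] at this
    exact this.2
  rcases Nat.lt_or_ge (i + 1) l.length with hlt | hge
  · rw [List.drop_eq_getElem_cons hlt] at hnext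
    simpa [Nat.mod_eq_of_lt hlt] using hnext.1.symm
  · have hlen : i + 1 = l.length := by omega
    rw [hlen, List.drop_length] at hnext
    simpa [← hlen, hwalk.source_head h0, IsWalk] using hnext

theorem exists_nodup_of_isWalk {l : List E} {v : V} (hl : l ≠ []) (hwalk : IsWalk s r v l v) :
    ∃ c ≠ [], IsWalk s r v c v ∧ (c.map s).Nodup := by
  induction hn : l.length using Nat.strong_induction_on generalizing l with
  | _ n ih =>
  by_cases hnodup : (l.map s).Nodup
  · exact ⟨l, hl, hwalk, hnodup⟩
  obtain ⟨i, j, hij, hj, hsame⟩ : ∃ i j, ∃ _ : i < j, ∃ hj : j < l.length, s l[i] = s l[j] := by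
    rw [List.Nodup, List.pairwise_iff_getElem] at hnodup
    push Not at hnodup
    obtain ⟨i, j, _, hj, hij, h⟩ := hnodup
    exact ⟨i, j, hij, by simpa using hj, by simpa using h⟩
  have hshortcut : IsWalk s r v (l.take i ++ l.drop j) v :=
    isWalk_append.2 ⟨_, hsame ▸ (hwalk.take_drop (hij.trans hj)).1, (hwalk.take_drop hj).2⟩
  refine ih _ ?_ ?_ hshortcut rfl
  · simp only [List.length_append, List.length_take, List.length_drop]
    omega
  · exact List.append_ne_nil_of_right_ne_nil _ (by simp [List.drop_eq_nil_iff]; omega)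

theorem eq_of_onCycle (hnoexit : ∀ c : List E, IsCycle s r c → ¬ HasExit s r c) {v : V}
    (hv : OnCycle s r v) {e₁ e₂ : E} (h₁ : s e₁ = v) (h₂ : s e₂ = v) : e₁ = e₂ := by
  obtain ⟨_, ⟨e, he, rfl⟩, hback⟩ := TransGen.head'_iff.1 hv
  obtain ⟨p, hp⟩ := exists_isWalk_of_reflTransGen hback
  obtain ⟨l, hl, hwalk, hnodup⟩ :=
    exists_nodup_of_isWalk (List.cons_ne_nil e p) (show IsWalk s r v (e :: p) v from ⟨he, hp⟩)
  have h0 : 0 < l.length := List.length_pos_iff.2 hl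
  have hfirst : ∀ f, s f = v → f = l[0] := fun f hf => by
    by_contra hne
    exact hnoexit l (isCycle_of_isWalk hl hwalk hnodup)
      ⟨f, 0, h0, by simp [hf, hwalk.source_head h0], hne⟩
  rw [hfirst e₁ h₁, hfirst e₂ h₂]

theorem OnCycle.reflTransGen_target (hnoexit : ∀ c : List E, IsCycle s r c → ¬ HasExit s r c)
    {v : V} (hv : OnCycle s r v) {e : E} (he : s e = v) : ReflTransGen (Adj s r) (r e) v := by
  obtain ⟨_, ⟨e', he', rfl⟩, hback⟩ := TransGen.head'_iff.1 hv
  rwa [eq_of_onCycle hnoexit hv he he']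

theorem OnCycle.target (hnoexit : ∀ c : List E, IsCycle s r c → ¬ HasExit s r c)
    {v : V} (hv : OnCycle s r v) {e : E} (he : s e = v) : OnCycle s r (r e) :=
  TransGen.tail' (hv.reflTransGen_target hnoexit he) ⟨e, he, rfl⟩

theorem sum_ite_source_eq [Fintype E] [DecidableEq V] {M : Type*} [AddCommMonoid M]
    (hnoexit : ∀ c : List E, IsCycle s r c → ¬ HasExit s r c) {v : V} (hv : OnCycle s r v)
    {e₀ : E} (he₀ : s e₀ = v) (f : E → M) :
    (∑ e, if s e = v then f e else 0) = f e₀ := by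
  rw [Fintype.sum_eq_single e₀ fun e he => if_neg fun hev => he (eq_of_onCycle hnoexit hv hev he₀),
    if_pos he₀]

theorem ncard_reach_lt [Finite V] {v w : V} (hv : ¬OnCycle s r v) (hvw : Adj s r v w) :
    {u | ReflTransGen (Adj s r) w u}.ncard < {u | ReflTransGen (Adj s r) v u}.ncard :=
  Set.ncard_lt_ncard ⟨fun _ hu => .head hvw hu, fun hsub => hv (.head' hvw (hsub .refl))⟩

variable (s r) in
/-- For `v` on a cycle of a no-exit graph the vertices reachable from `v` are those of its cycle,
so this picks one representative per cycle. -/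
noncomputable def cycleRep (v : V) : V :=
  haveI : Nonempty V := ⟨v⟩
  Classical.epsilon (ReflTransGen (Adj s r) v)

theorem reflTransGen_cycleRep (v : V) : ReflTransGen (Adj s r) v (cycleRep s r v) :=
  haveI : Nonempty V := ⟨v⟩
  Classical.epsilon_spec ⟨v, .refl⟩

theorem cycleRep_eq {v w : V} (hvw : ReflTransGen (Adj s r) v w)
    (hwv : ReflTransGen (Adj s r) w v) : cycleRep s r v = cycleRep s r w := by
  have : ReflTransGen (Adj s r) v = ReflTransGen (Adj s r) w :=
    funext fun u => propext ⟨hwv.trans, hvw.trans⟩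
  simp only [cycleRep, this]

variable [Fintype E] [DecidableEq V]

local notation "π" => AddCon.mk' (addConGen (graphRel s r))

theorem mk'_single_eq_sum {v : V} (hreg : ∃ e, s e = v) :
    π (Pi.single v 1) = π (∑ e, if s e = v then Pi.single (r e) 1 else 0) :=
  (AddCon.eq _).2 (AddConGen.Rel.of _ _ ⟨v, hreg, rfl, rfl⟩)

theorem mk'_single_eq_of_reflTransGen (hnoexit : ∀ c : List E, IsCycle s r c → ¬ HasExit s r c)
    {v w : V} (hv : OnCycle s r v) (hvw : ReflTransGen (Adj s r) v w) :
    π (Pi.single v 1) = π (Pi.single w 1) := by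
  induction hvw using ReflTransGen.head_induction_on with
  | refl => rfl
  | head hstep _ ih =>
    obtain ⟨e, he, rfl⟩ := hstep
    rw [mk'_single_eq_sum ⟨e, he⟩, sum_ite_source_eq hnoexit hv he]
    exact ih (hv.target hnoexit he)

variable (s r) in
open Classical in
noncomputable def normalForm [Finite V] (v : V) : V → ℕ :=
  if hv : OnCycle s r v then Pi.single (cycleRep s r v) 1
  else if ∃ e, s e = v then ∑ e, if _ : s e = v then normalForm (r e) else 0
  else Pi.single v 1
termination_by {u | ReflTransGen (Adj s r) v u}.ncard
decreasing_by exact ncard_reach_lt hv ⟨e, ‹_›, rfl⟩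

section NormalForm

variable [Finite V]

theorem normalForm_of_onCycle {v : V} (hv : OnCycle s r v) :
    normalForm s r v = Pi.single (cycleRep s r v) 1 := by
  rw [normalForm, dif_pos hv]

theorem normalForm_of_not_onCycle {v : V} (hv : ¬OnCycle s r v) (hreg : ∃ e, s e = v) :
    normalForm s r v = ∑ e, if s e = v then normalForm s r (r e) else 0 := by
  rw [normalForm, dif_neg hv, if_pos hreg]
  rfl

theorem normalForm_of_sink {v : V} (hsink : ¬∃ e, s e = v) :
    normalForm s r v = Pi.single v 1 := by
  have hv : ¬OnCycle s r v := fun hv =>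
    have ⟨_, ⟨e, he, _⟩, _⟩ := TransGen.head'_iff.1 hv
    hsink ⟨e, he⟩
  rw [normalForm, dif_neg hv, if_neg hsink]

theorem normalForm_eq_sum (hnoexit : ∀ c : List E, IsCycle s r c → ¬ HasExit s r c) {v : V}
    (hreg : ∃ e, s e = v) :
    normalForm s r v = ∑ e, if s e = v then normalForm s r (r e) else 0 := by
  by_cases hv : OnCycle s r v
  · obtain ⟨e₀, he₀⟩ := hreg
    rw [sum_ite_source_eq hnoexit hv he₀, normalForm_of_onCycle hv,
      normalForm_of_onCycle (hv.target hnoexit he₀),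
      cycleRep_eq (.single ⟨e₀, he₀, rfl⟩) (hv.reflTransGen_target hnoexit he₀)]
  · exact normalForm_of_not_onCycle hv hreg

end NormalForm

variable [Fintype V]

variable (s r) in
noncomputable def normalFormHom : (V → ℕ) →+ (V → ℕ) :=
  (Fintype.linearCombination ℕ (normalForm s r)).toAddMonoidHom

theorem normalFormHom_single (v : V) : normalFormHom s r (Pi.single v 1) = normalForm s r v := by
  simp [normalFormHom, Fintype.linearCombination_apply_single]

theorem addConGen_le_ker_normalFormHom
    (hnoexit : ∀ c : List E, IsCycle s r c → ¬ HasExit s r c) :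
    addConGen (graphRel s r) ≤ AddCon.ker (normalFormHom s r) := by
  refine AddCon.addConGen_le.2 fun x y ⟨v, hreg, hx, hy⟩ => ?_
  rw [AddCon.ker_rel, hx, hy, map_sum, normalFormHom_single, normalForm_eq_sum hnoexit hreg]
  refine Finset.sum_congr rfl fun e _ => ?_
  split_ifs
  · exact (normalFormHom_single _).symm
  · exact (map_zero _).symm

noncomputable def normalFormLift (hnoexit : ∀ c : List E, IsCycle s r c → ¬ HasExit s r c) :
    (addConGen (graphRel s r)).Quotient →+ (V → ℕ) :=
  AddCon.lift _ (normalFormHom s r) (addConGen_le_ker_normalFormHom hnoexit)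

theorem mk'_normalForm (hnoexit : ∀ c : List E, IsCycle s r c → ¬ HasExit s r c) (v : V) :
    π (normalForm s r v) = π (Pi.single v 1) := by
  by_cases hv : OnCycle s r v
  · rw [normalForm_of_onCycle hv]
    exact (mk'_single_eq_of_reflTransGen hnoexit hv (reflTransGen_cycleRep v)).symm
  by_cases hreg : ∃ e, s e = v
  · rw [normalForm_of_not_onCycle hv hreg, mk'_single_eq_sum hreg, map_sum, map_sum]
    refine Finset.sum_congr rfl fun e _ => ?_
    split_ifs with he
    · exact mk'_normalForm hnoexit (r e)
    · rfl
  · rw [normalForm_of_sink hreg]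
termination_by {u | ReflTransGen (Adj s r) v u}.ncard
decreasing_by exact ncard_reach_lt hv ⟨e, he, rfl⟩

theorem leftInverse_mk'_normalFormLift
    (hnoexit : ∀ c : List E, IsCycle s r c → ¬ HasExit s r c) :
    Function.LeftInverse π (normalFormLift hnoexit) := by
  have hsection : (π).comp (normalFormHom s r) = π := by
    ext v
    simpa [normalFormHom_single] using mk'_normalForm hnoexit v
  intro q
  induction q using AddCon.induction_on with
  | H x => exact DFunLike.congr_fun hsection x

end GraphMonoid

/-- Let `E` be a finite no-exit directed graph (no cycle of `E` has an
exit).  Then the graph monoid `M_E` is cancellative: `a + c = b + c` implies `a = b`. -/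
theorem stmt_17 [Fintype V] [Fintype E] [DecidableEq V]
    (s r : E → V)
    (hnoexit : ∀ c : List E, IsCycle s r c → ¬ HasExit s r c) :
    ∀ a b c : (addConGen (graphRel s r)).Quotient, a + c = b + c → a = b := by
  intro a b c h
  apply (GraphMonoid.leftInverse_mk'_normalFormLift hnoexit).injective
  apply add_right_cancel (b := GraphMonoid.normalFormLift hnoexit c)
  rw [← map_add, ← map_add, h]
end

section
/- Let M be the quotient of the free abelian monoid on two generators x, y by the monoid congruence generated by the single relation x = 2x + 2y. Then: (a) for all positive integers m and n, n·[x + y] = m·[x + y] in M implies n = m; and (b) [x + y] = 2·[x + y] + [y] in M (so the order-unit [x + y] does not have Unbounded Generating Number, although it has the Invariant Basis Number property). -/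
/-!
Give `x` weight `-2` and `y` weight `1`. The relation `x = 2x + 2y` preserves weight, so the
weight descends to an additive map `M → ℤ`, sending `[x + y]` to `-1`; hence `n • [x + y]`
has weight `-n` and determines `n`. Part (b) is the defining relation with `[y]` added to
both sides.
-/

/-- The free abelian monoid on generators `x`, `y`, realized as `ℕ × ℕ`
(`x = (1,0)`, `y = (0,1)`), with the single defining relation `x = 2x + 2y`. -/
def relXY : ℕ × ℕ → ℕ × ℕ → Prop := fun a b => a = (1, 0) ∧ b = (2, 2)

lemma nsmul_left_injective_of_map_ne_zero {A : Type*} [AddMonoid A] (φ : A →+ ℤ) {e : A}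
    (he : φ e ≠ 0) : Function.Injective (fun n : ℕ => n • e) := by
  intro n m h
  have hφ := congrArg φ h
  simp only [map_nsmul, nsmul_eq_mul] at hφ
  exact_mod_cast mul_right_cancel₀ he hφ

def xyWeight : ℕ × ℕ →+ ℤ where
  toFun a := (a.2 : ℤ) - 2 * a.1
  map_zero' := by simp
  map_add' a b := by push_cast [Prod.fst_add, Prod.snd_add]; ring

lemma addConGen_relXY_le_ker_xyWeight : addConGen relXY ≤ AddCon.ker xyWeight :=
  AddCon.addConGen_le.mpr <| by
    rintro a b ⟨rfl, rfl⟩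
    show xyWeight (1, 0) = xyWeight (2, 2)
    simp [xyWeight]

lemma addConGen_relXY_mk'_one_zero : (addConGen relXY).mk' (1, 0) = (addConGen relXY).mk' (2, 2) :=
  (AddCon.eq _).mpr <| AddConGen.Rel.of _ _ ⟨rfl, rfl⟩

/-- Let `M` be the quotient of the free abelian monoid on `x`, `y` by the
monoid congruence generated by `x = 2x + 2y`.  Then
(a) for all positive integers `m`, `n`, `n • [x + y] = m • [x + y]` implies `n = m`; and
(b) `[x + y] = 2 • [x + y] + [y]` in `M`. -/
theorem stmt_18 :
    (∀ m n : ℕ, 0 < m → 0 < n →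
        n • (addConGen relXY).mk' (1, 1) = m • (addConGen relXY).mk' (1, 1) → n = m) ∧
      (addConGen relXY).mk' (1, 1) =
        2 • (addConGen relXY).mk' (1, 1) + (addConGen relXY).mk' (0, 1) := by
  set c := addConGen relXY
  refine ⟨fun m n _ _ h => ?_, ?_⟩
  · have hweight : c.lift xyWeight addConGen_relXY_le_ker_xyWeight (c.mk' (1, 1)) ≠ 0 := by
      simp [xyWeight]
    exact nsmul_left_injective_of_map_ne_zero _ hweight h
  · calc c.mk' (1, 1) = c.mk' (1, 0) + c.mk' (0, 1) := by rw [← map_add]; rfl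
      _ = c.mk' (2, 2) + c.mk' (0, 1) := by rw [addConGen_relXY_mk'_one_zero]
      _ = 2 • c.mk' (1, 1) + c.mk' (0, 1) := by rw [← map_nsmul]; rfl
end

section
/- Let M be the quotient of the free abelian monoid on three generators v₁, v₂, v₃ by the monoid congruence generated by the relations v₁ = 2v₁ + v₂ and v₂ = v₃. Then for all positive integers m > n, [(6m − 5n)·v₁ + m·v₂ + (5m − 4n)·v₃] = [n·v₁ + n·v₂ + n·v₃] in M; equivalently, m·[v₁ + v₂ + v₃] + [5(m−n)·v₁ + 4(m−n)·v₃] = n·[v₁ + v₂ + v₃], so the order-unit [v₁ + v₂ + v₃] of M does not have Unbounded Generating Number. -/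
/-- The free abelian monoid on generators `v₁`, `v₂`, `v₃`, realized as `ℕ × ℕ × ℕ`
(`v₁ = (1,0,0)`, `v₂ = (0,1,0)`, `v₃ = (0,0,1)`), with the defining relations
`v₁ = 2v₁ + v₂` and `v₂ = v₃`. -/
def relV : ℕ × ℕ × ℕ → ℕ × ℕ × ℕ → Prop := fun a b =>
  (a = (1, 0, 0) ∧ b = (2, 1, 0)) ∨ (a = (0, 1, 0) ∧ b = (0, 0, 1))

/-!
Since `v₂ = v₃`, every class is `[a v₁ + s v₂]`, and `v₁ = v₁ + (v₁ + v₂)` lets one add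
`k (v₁ + v₂)` to any class with `a ≥ 1`. Hence two classes with `a, a' ≥ 1` agree as soon as
`a - s = a' - s'`, and both sides of each identity have `a - s = -n`.
-/

theorem add_nsmul_eq_self_of_add_eq_self {M : Type*} [AddMonoid M] {x y : M} (h : x + y = x)
    (k : ℕ) : x + k • y = x := by
  induction k with
  | zero => rw [zero_nsmul, add_zero]
  | succ k ih => rw [succ_nsmul, ← add_assoc, ih, h]

namespace relV

local notation "π" => AddCon.mk' (addConGen relV)

theorem mk'_v₃_eq_v₂ : π (0, 0, 1) = π (0, 1, 0) :=
  ((addConGen relV).eq.2 (AddConGen.Rel.of _ _ (Or.inr ⟨rfl, rfl⟩))).symm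

theorem mk'_v₁_add_v₁_add_v₂ : π (1, 0, 0) + (π (1, 0, 0) + π (0, 1, 0)) = π (1, 0, 0) := by
  rw [← map_add, ← map_add]
  exact ((addConGen relV).eq.2 (AddConGen.Rel.of _ _ (Or.inl ⟨rfl, rfl⟩))).symm

theorem mk'_eq_nsmul_v₁_add_nsmul_v₂ (a b c : ℕ) :
    π (a, b, c) = a • π (1, 0, 0) + (b + c) • π (0, 1, 0) := by
  have hsplit : ((a, b, c) : ℕ × ℕ × ℕ) = a • (1, 0, 0) + b • (0, 1, 0) + c • (0, 0, 1) := by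
    ext <;> simp
  rw [hsplit, map_add, map_add, map_nsmul, map_nsmul, map_nsmul, mk'_v₃_eq_v₂, add_nsmul,
    add_assoc]

theorem nsmul_v₁_add_nsmul_v₂_eq {a : ℕ} (ha : 0 < a) (s k : ℕ) :
    a • π (1, 0, 0) + s • π (0, 1, 0) = (a + k) • π (1, 0, 0) + (s + k) • π (0, 1, 0) := by
  obtain ⟨a, rfl⟩ : ∃ a', a = a' + 1 := ⟨a - 1, by omega⟩
  calc (a + 1) • π (1, 0, 0) + s • π (0, 1, 0)
      = a • π (1, 0, 0) + (π (1, 0, 0) + k • (π (1, 0, 0) + π (0, 1, 0))) + s • π (0, 1, 0) := by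
        rw [add_nsmul_eq_self_of_add_eq_self mk'_v₁_add_v₁_add_v₂, succ_nsmul]
    _ = (a + 1 + k) • π (1, 0, 0) + (s + k) • π (0, 1, 0) := by
        simp only [nsmul_add, add_nsmul, one_nsmul]
        abel

theorem mk'_eq_mk'_of_add_eq {a b c a' b' c' : ℕ} (ha : 0 < a) (ha' : 0 < a')
    (h : a + (b' + c') = a' + (b + c)) : π (a, b, c) = π (a', b', c') := by
  rw [mk'_eq_nsmul_v₁_add_nsmul_v₂ a, mk'_eq_nsmul_v₁_add_nsmul_v₂ a',
    nsmul_v₁_add_nsmul_v₂_eq ha (b + c) (b' + c'), nsmul_v₁_add_nsmul_v₂_eq ha' (b' + c') (b + c),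
    h, add_comm (b + c)]

end relV

/-- Let `M` be the quotient of the free abelian monoid on `v₁, v₂, v₃` by
the monoid congruence generated by `v₁ = 2v₁ + v₂` and `v₂ = v₃`.  Then for all positive
integers `m > n`, `[(6m − 5n)v₁ + m v₂ + (5m − 4n)v₃] = [n v₁ + n v₂ + n v₃]` in `M`;
equivalently `m • [v₁ + v₂ + v₃] + [5(m−n) v₁ + 4(m−n) v₃] = n • [v₁ + v₂ + v₃]`
(so the order-unit `[v₁ + v₂ + v₃]` does not have Unbounded Generating Number). -/
theorem stmt_19 (m n : ℕ) (hn : 0 < n) (hmn : n < m) :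
    (addConGen relV).mk' (6 * m - 5 * n, m, 5 * m - 4 * n) =
        (addConGen relV).mk' (n, n, n) ∧
      m • (addConGen relV).mk' (1, 1, 1) +
          (addConGen relV).mk' (5 * (m - n), 0, 4 * (m - n)) =
        n • (addConGen relV).mk' (1, 1, 1) := by
  refine ⟨relV.mk'_eq_mk'_of_add_eq (by omega) hn (by omega), ?_⟩
  have hsum : m • ((1, 1, 1) : ℕ × ℕ × ℕ) + (5 * (m - n), 0, 4 * (m - n)) =
      (m + 5 * (m - n), m, m + 4 * (m - n)) := by
    ext <;> simp
  have hdiag : n • ((1, 1, 1) : ℕ × ℕ × ℕ) = (n, n, n) := by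
    ext <;> simp
  rw [← map_nsmul, ← map_nsmul, ← map_add, hsum, hdiag]
  exact relV.mk'_eq_mk'_of_add_eq (by omega) hn (by omega)
end
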